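/- arXiv:1711.05190 — 11 statements merged into one kernel-verified Lean document; each statement's English description precedes it below -/
import Mathlib

section
/- If a vertex v of a graph G is adjacent to three or more leaves, then v is contained in every minimum power dominating set of G. -/
namespace RPD

variable {V : Type*}

/-- The closed neighborhood of a set of vertices. -/
def closedNbhd (G : SimpleGraph V) (S : Set V) : Set V :=
  S ∪ {v | ∃ u ∈ S, G.Adj u v}

/-- The zero forcing closure: `ZFC G B v` means `v` eventually gets colored when
starting from the blue set `B` and repeatedly applying the color change rule
(a colored vertex with exactly one uncolored neighbor colors that neighbor). -/
inductive ZFC (G : SimpleGraph V) (B : Set V) : V → Prop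
  | init (v : V) (hv : v ∈ B) : ZFC G B v
  | force (u w : V) (hu : ZFC G B u) (hadj : G.Adj u w)
      (hothers : ∀ x, G.Adj u x → x ≠ w → ZFC G B x) : ZFC G B w

/-- `B` is a zero forcing set of `G`. -/
def IsZFS (G : SimpleGraph V) (B : Set V) : Prop := ∀ v, ZFC G B v

/-- `S` is a power dominating set of `G`: its closed neighborhood is a zero forcing set. -/
def IsPDS (G : SimpleGraph V) (S : Set V) : Prop := IsZFS G (closedNbhd G S)

/-- The restricted zero forcing number `Z(G;X)`; `Z(G) = zNum G ∅`. -/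
noncomputable def zNum (G : SimpleGraph V) (X : Set V) : ℕ :=
  sInf {n | ∃ B : Set V, X ⊆ B ∧ IsZFS G B ∧ B.ncard = n}

/-- The restricted power domination number `γ_P(G;X)`; `γ_P(G) = pdNum G ∅`. -/
noncomputable def pdNum (G : SimpleGraph V) (X : Set V) : ℕ :=
  sInf {n | ∃ S : Set V, X ⊆ S ∧ IsPDS G S ∧ S.ncard = n}

/-- A leaf is a vertex of degree one, i.e. whose neighbor set is a singleton. -/
def IsLeaf (G : SimpleGraph V) (l : V) : Prop := ∃ u, G.neighborSet l = {u}

end RPD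

open RPD

lemma zfc_mono {V : Type*} (G : SimpleGraph V) {B B' : Set V} (h : B ⊆ B') :
    ∀ {w}, ZFC G B w → ZFC G B' w := by
  intro w hw
  induction hw with
  | init x hx => exact .init x (h hx)
  | force u w hu hadj hothers ihu ihothers =>
      exact .force u w ihu hadj fun x hx hne => ihothers x hx hne

lemma two_leaves {V : Type*} (G : SimpleGraph V) {B : Set V} {v a b : V}
    (hab : a ≠ b) (ha : G.neighborSet a = {v}) (hb : G.neighborSet b = {v})
    (haB : a ∉ B) (hbB : b ∉ B) {w : V} (hw : ZFC G B w) : w ≠ a ∧ w ≠ b := by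
  induction hw with
  | init x hx => constructor <;> rintro rfl <;> contradiction
  | force u w hu hadj hothers ihu ihothers =>
      constructor
      · rintro rfl
        have hu_eq : u = v := by
          have h1 : G.Adj w u := hadj.symm
          rw [← SimpleGraph.mem_neighborSet, ha] at h1
          exact h1
        have hadjb : G.Adj u b := by
          have h2 : v ∈ G.neighborSet b := by rw [hb]; rfl
          rw [hu_eq]; exact h2.symm
        exact (ihothers b hadjb hab.symm).2 rfl
      · rintro rfl
        have hu_eq : u = v := by
          have h1 : G.Adj w u := hadj.symm
          rw [← SimpleGraph.mem_neighborSet, hb] at h1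
          exact h1
        have hadja : G.Adj u a := by
          have h2 : v ∈ G.neighborSet a := by rw [ha]; rfl
          rw [hu_eq]; exact h2.symm
        exact (ihothers a hadja hab).1 rfl


theorem stmt4 {V : Type*} [Finite V] (G : SimpleGraph V) (v l₁ l₂ l₃ : V)
    (h12 : l₁ ≠ l₂) (h13 : l₁ ≠ l₃) (h23 : l₂ ≠ l₃)
    (hleaf : ∀ l ∈ ({l₁, l₂, l₃} : Set V), IsLeaf G l ∧ G.Adj v l)
    (S : Set V) (hS : IsPDS G S) (hmin : S.ncard = pdNum G ∅) : v ∈ S := by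
  by_contra hvS
  -- neighbor set of each leaf is {v}
  have hn : ∀ l ∈ ({l₁, l₂, l₃} : Set V), G.neighborSet l = {v} := by
    intro l hl
    obtain ⟨⟨u, hu⟩, hadj⟩ := hleaf l hl
    have : v ∈ G.neighborSet l := hadj.symm
    rw [hu] at this
    rw [hu, this]
  -- key : can't have two of the leaves in S
  have key : ∀ a b : V, a ≠ b → G.neighborSet a = {v} → G.neighborSet b = {v} →
      a ∈ S → b ∈ S → False := by
    intro a b hab hna hnb haS hbS
    set S' : Set V := insert v (S \ {a, b}) with hS'def
    have hsub : closedNbhd G S ⊆ closedNbhd G S' := by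
      rintro x (hx | ⟨u, huS, hadj⟩)
      · by_cases hxa : x = a
        · subst hxa
          refine Or.inr ⟨v, Or.inl rfl, ?_⟩
          have : v ∈ G.neighborSet x := by rw [hna]; rfl
          exact this.symm
        · by_cases hxb : x = b
          · subst hxb
            refine Or.inr ⟨v, Or.inl rfl, ?_⟩
            have : v ∈ G.neighborSet x := by rw [hnb]; rfl
            exact this.symm
          · exact Or.inl (Or.inr ⟨hx, by simp [hxa, hxb]⟩)
      · by_cases hua : u = a
        · subst hua
          have : x ∈ G.neighborSet u := hadj
          rw [hna] at this
          exact Or.inl (Or.inl this)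
        · by_cases hub : u = b
          · subst hub
            have : x ∈ G.neighborSet u := hadj
            rw [hnb] at this
            exact Or.inl (Or.inl this)
          · exact Or.inr ⟨u, Or.inr ⟨huS, by simp [hua, hub]⟩, hadj⟩
    have hPDS' : IsPDS G S' := fun w => zfc_mono G hsub (hS w)
    have hp : pdNum G ∅ ≤ S'.ncard :=
      Nat.sInf_le ⟨S', Set.empty_subset _, hPDS', rfl⟩
    have hsubS : ({a, b} : Set V) ⊆ S := by
      rintro x (rfl | rfl)
      · exact haS
      · exact hbS
    have hdiff : (S \ {a, b}).ncard + 2 = S.ncard := by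
      have := Set.ncard_diff_add_ncard_of_subset hsubS (Set.toFinite S)
      rwa [Set.ncard_pair hab] at this
    have hle : S'.ncard ≤ (S \ {a, b}).ncard + 1 := Set.ncard_insert_le _ _
    omega
  -- each pair of leaves: at least one is in S
  have hpair : ∀ a ∈ ({l₁, l₂, l₃} : Set V), ∀ b ∈ ({l₁, l₂, l₃} : Set V),
      a ≠ b → a ∈ S ∨ b ∈ S := by
    intro a ha b hb hab
    by_contra hcon
    push_neg at hcon
    obtain ⟨haS, hbS⟩ := hcon
    have hmem : ∀ l ∈ ({l₁, l₂, l₃} : Set V), l ∉ S → l ∉ closedNbhd G S := by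
      rintro l hl hlS (h | ⟨u, huS, hadj⟩)
      · exact hlS h
      · have : u ∈ G.neighborSet l := hadj.symm
        rw [hn l hl] at this
        exact hvS (this ▸ huS)
    exact (two_leaves G hab (hn a ha) (hn b hb) (hmem a ha haS) (hmem b hb hbS)
      (hS a)).1 rfl
  have m1 : l₁ ∈ ({l₁, l₂, l₃} : Set V) := Or.inl rfl
  have m2 : l₂ ∈ ({l₁, l₂, l₃} : Set V) := Or.inr (Or.inl rfl)
  have m3 : l₃ ∈ ({l₁, l₂, l₃} : Set V) := Or.inr (Or.inr rfl)
  rcases hpair l₁ m1 l₂ m2 h12 with h1 | h2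
  · rcases hpair l₂ m2 l₃ m3 h23 with h2 | h3
    · exact key l₁ l₂ h12 (hn l₁ m1) (hn l₂ m2) h1 h2
    · exact key l₁ l₃ h13 (hn l₁ m1) (hn l₃ m3) h1 h3
  · rcases hpair l₁ m1 l₃ m3 h13 with h1 | h3
    · exact key l₁ l₂ h12 (hn l₁ m1) (hn l₂ m2) h1 h2
    · exact key l₂ l₃ h23 (hn l₂ m2) (hn l₃ m3) h2 h3
end

section
/- If a vertex v of a graph G is adjacent to exactly two leaves, then every minimum power dominating set of G contains either v or one of these two leaf neighbors of v. -/
open RPD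

theorem stmt5 {V : Type*} [Finite V] (G : SimpleGraph V) (v l₁ l₂ : V)
    (h12 : l₁ ≠ l₂)
    (hleaf : ∀ l ∈ ({l₁, l₂} : Set V), IsLeaf G l ∧ G.Adj v l)
    (honly : ∀ l, IsLeaf G l → G.Adj v l → l = l₁ ∨ l = l₂)
    (S : Set V) (hS : IsPDS G S) (hmin : S.ncard = pdNum G ∅) :
    v ∈ S ∨ l₁ ∈ S ∨ l₂ ∈ S := by
  by_contra hcon
  push_neg at hcon
  obtain ⟨hvS, h1S, h2S⟩ := hcon
  -- neighbor sets of the leaves are {v}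
  have hnbr : ∀ l ∈ ({l₁, l₂} : Set V), G.neighborSet l = {v} := by
    intro l hl
    obtain ⟨⟨u, hu⟩, hadj⟩ := hleaf l hl
    have hv : v ∈ G.neighborSet l := hadj.symm
    rw [hu] at hv
    rw [hu, hv]
  -- leaves are not in the closed neighborhood
  have hnotB : ∀ l ∈ ({l₁, l₂} : Set V), l ∉ closedNbhd G S := by
    intro l hl hB
    rcases hB with hB | ⟨u, huS, hadj⟩
    · rcases hl with rfl | rfl
      · exact h1S hB
      · exact h2S hB
    · have : u ∈ G.neighborSet l := hadj.symm
      rw [hnbr l hl] at this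
      rw [this] at huS
      exact hvS huS
  -- nothing in the ZFC closure is a leaf
  have key : ∀ w, ZFC G (closedNbhd G S) w → w ∉ ({l₁, l₂} : Set V) := by
    intro w hw
    induction hw with
    | init w hv => exact fun hl => hnotB w hl hv
    | force u w hu hadj hothers ihu ih =>
      intro hl
      have hu_v : u = v := by
        have : u ∈ G.neighborSet w := hadj.symm
        rw [hnbr w hl] at this
        exact this
      subst hu_v
      rcases hl with rfl | rfl
      · exact ih l₂ (hleaf l₂ (Or.inr rfl)).2 (Ne.symm h12) (Or.inr rfl)
      · exact ih l₁ (hleaf l₁ (Or.inl rfl)).2 h12 (Or.inl rfl)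
  exact key l₁ (hS l₁) (Or.inl rfl)
end

section
/- For any graph G=(V,E) and set X ⊆ V, γ_P(G;X) = γ_P(ℓ₂(G,X)), where ℓ₂(G,X) is the graph obtained from G by attaching two new leaf vertices to each vertex of X. -/
open RPD

/-- `leafExt G X r` is the graph `ℓ_r(G,X)` obtained from `G` by attaching `r` new
pendant (leaf) vertices to each vertex of `X`. -/
def leafExt {V : Type*} (G : SimpleGraph V) (X : Set V) (r : ℕ) :
    SimpleGraph (V ⊕ (X × Fin r)) :=
  SimpleGraph.fromRel (fun a b =>
    match a, b with
    | Sum.inl u, Sum.inl v => G.Adj u v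
    | Sum.inl u, Sum.inr p => u = (p.1 : V)
    | Sum.inr _, _ => False)


section Aux

variable {V : Type*} {G : SimpleGraph V} {X : Set V}

/-- projection -/
def pj : V ⊕ (↥X × Fin 2) → V
  | Sum.inl v => v
  | Sum.inr p => p.1

lemma adj_ll {u v : V} : (leafExt G X 2).Adj (Sum.inl u) (Sum.inl v) ↔ G.Adj u v := by
  simp only [leafExt, SimpleGraph.fromRel_adj]
  constructor
  · rintro ⟨-, h | h⟩
    · exact h
    · exact h.symm
  · intro h
    exact ⟨by simp [h.ne], Or.inl h⟩

lemma adj_lr {u : V} {p : ↥X × Fin 2} :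
    (leafExt G X 2).Adj (Sum.inl u) (Sum.inr p) ↔ u = (p.1 : V) := by
  simp [leafExt, SimpleGraph.fromRel_adj]

lemma adj_rr {p q : ↥X × Fin 2} :
    ¬ (leafExt G X 2).Adj (Sum.inr p) (Sum.inr q) := by
  simp [leafExt, SimpleGraph.fromRel_adj]

lemma adj_rl {u : V} {p : ↥X × Fin 2} :
    (leafExt G X 2).Adj (Sum.inr p) (Sum.inl u) ↔ u = (p.1 : V) := by
  rw [(leafExt G X 2).adj_comm]; exact adj_lr



/-- Forward: a PDS of `G` containing `X` lifts to a PDS of `leafExt G X 2`. -/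
lemma lift_pds {S : Set V} (hX : X ⊆ S) (hS : IsPDS G S) :
    IsPDS (leafExt G X 2) (Sum.inl '' S) := by
  set H := leafExt G X 2
  set B := closedNbhd G S with hB
  set B'' := closedNbhd H (Sum.inl '' S) with hB''
  have hinr : ∀ p : ↥X × Fin 2, Sum.inr p ∈ B'' := by
    intro p
    exact Or.inr ⟨Sum.inl (p.1 : V), ⟨p.1, hX p.1.2, rfl⟩, adj_lr.2 rfl⟩
  have hsub : ∀ v, v ∈ B → Sum.inl v ∈ B'' := by
    rintro v (hv | ⟨u, hu, hadj⟩)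
    · exact Or.inl ⟨v, hv, rfl⟩
    · exact Or.inr ⟨Sum.inl u, ⟨u, hu, rfl⟩, adj_ll.2 hadj⟩
  have lift : ∀ v, ZFC G B v → ZFC H B'' (Sum.inl v) := by
    intro v hv
    induction hv with
    | init v hv => exact ZFC.init _ (hsub v hv)
    | force u w hu hadj hothers ihu ihothers =>
      refine ZFC.force (Sum.inl u) (Sum.inl w) ihu (adj_ll.2 hadj) ?_
      rintro (a | p) hax hne
      · exact ihothers a (adj_ll.1 hax) (fun h => hne (by rw [h]))
      · exact ZFC.init _ (hinr p)
  rintro (v | p)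
  · exact lift v (hS v)
  · exact ZFC.init _ (hinr p)

/-- Backward: `X` is contained in the projection of any PDS of `leafExt G X 2`. -/
lemma proj_mem {S' : Set (V ⊕ (↥X × Fin 2))} (hS' : IsPDS (leafExt G X 2) S') :
    X ⊆ pj '' S' := by
  set H := leafExt G X 2
  set B' := closedNbhd H S' with hB'
  intro x hx
  set x' : ↥X := ⟨x, hx⟩
  have key : ∀ z, ZFC H B' z → ∀ i : Fin 2, z = Sum.inr (x', i) →
      (Sum.inr (x', 0) ∈ B' ∨ Sum.inr (x', 1) ∈ B') := by
    intro z hz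
    induction hz with
    | init v hv =>
      intro i hw
      have h2 : i = 0 ∨ i = 1 := by omega
      rcases h2 with rfl | rfl
      · exact Or.inl (hw ▸ hv)
      · exact Or.inr (hw ▸ hv)
    | force u w hu hadj hothers ihu ihothers =>
      intro i hw
      subst hw
      obtain (a | p) := u
      · have ha : a = x := adj_lr.1 hadj
        have h2 : i = 0 ∨ i = 1 := by omega
        rcases h2 with rfl | rfl
        · exact ihothers (Sum.inr (x', 1)) (adj_lr.2 ha) (by simp) 1 rfl
        · exact ihothers (Sum.inr (x', 0)) (adj_lr.2 ha) (by simp) 0 rfl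
      · exact absurd hadj adj_rr
  have hleaf : Sum.inr (x', 0) ∈ B' ∨ Sum.inr (x', 1) ∈ B' :=
    key _ (hS' (Sum.inr (x', 0))) 0 rfl
  have memB' : ∀ i : Fin 2, Sum.inr (x', i) ∈ B' → x ∈ pj '' S' := by
    rintro i (h | ⟨u, hu, hadj⟩)
    · exact ⟨Sum.inr (x', i), h, rfl⟩
    · obtain (a | p) := u
      · have : (x : V) = a := (adj_lr.1 hadj).symm
        exact ⟨Sum.inl a, hu, this.symm⟩
      · exact absurd hadj adj_rr
  rcases hleaf with h | h
  · exact memB' 0 h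
  · exact memB' 1 h

/-- Backward: the projection of a PDS of `leafExt G X 2` is a PDS of `G`. -/
lemma proj_pds {S' : Set (V ⊕ (↥X × Fin 2))} (hS' : IsPDS (leafExt G X 2) S') :
    IsPDS G (pj '' S') := by
  set H := leafExt G X 2
  set S : Set V := pj '' S' with hSdef
  set B := closedNbhd G S with hB
  set B' := closedNbhd H S' with hB'
  have projB : ∀ z, z ∈ B' → pj z ∈ B := by
    rintro z (hz | ⟨u, hu, hadj⟩)
    · exact Or.inl ⟨z, hz, rfl⟩
    · obtain (a | q) := u
      · obtain (v | p) := z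
        · exact Or.inr ⟨a, ⟨Sum.inl a, hu, rfl⟩, adj_ll.1 hadj⟩
        · have : a = (p.1 : V) := adj_lr.1 hadj
          exact Or.inl ⟨Sum.inl a, hu, this⟩
      · obtain (v | p) := z
        · have : v = (q.1 : V) := adj_rl.1 hadj
          exact Or.inl ⟨Sum.inr q, hu, this.symm⟩
        · exact absurd hadj adj_rr
  have projZ : ∀ z, ZFC H B' z → ZFC G B (pj z) := by
    intro z hz
    induction hz with
    | init v hv => exact ZFC.init _ (projB v hv)
    | force u w hu hadj hothers ihu ihothers =>
      obtain (a | q) := u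
      · obtain (b | p) := w
        · refine ZFC.force a b ihu (adj_ll.1 hadj) ?_
          intro y hy hne
          exact ihothers (Sum.inl y) (adj_ll.2 hy) (fun h => hne (by injection h))
        · have : a = (p.1 : V) := adj_lr.1 hadj
          simpa [pj, ← this] using ihu
      · have hw : w = Sum.inl (q.1 : V) := by
          obtain (b | p) := w
          · rw [adj_rl.1 hadj]
          · exact absurd hadj adj_rr
        subst hw
        simpa [pj] using ihu
  intro v
  have := projZ (Sum.inl v) (hS' (Sum.inl v))
  simpa [pj] using this

end Aux

theorem stmt7 {V : Type*} [Finite V] (G : SimpleGraph V) (X : Set V) :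
    pdNum G X = pdNum (leafExt G X 2) ∅ := by
  have hne1 : {n | ∃ S : Set V, X ⊆ S ∧ IsPDS G S ∧ S.ncard = n}.Nonempty :=
    ⟨_, Set.univ, Set.subset_univ _, fun v => ZFC.init v (Or.inl trivial), rfl⟩
  have hne2 : {n | ∃ S : Set (V ⊕ (↥X × Fin 2)), ∅ ⊆ S ∧ IsPDS (leafExt G X 2) S ∧
      S.ncard = n}.Nonempty :=
    ⟨_, Set.univ, Set.empty_subset _, fun v => ZFC.init v (Or.inl trivial), rfl⟩
  apply le_antisymm
  · obtain ⟨S', -, hPDS', hcard⟩ := Nat.sInf_mem hne2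
    have h1 : pdNum G X ≤ (pj '' S').ncard :=
      Nat.sInf_le ⟨pj '' S', proj_mem hPDS', proj_pds hPDS', rfl⟩
    have h2 : (pj '' S').ncard ≤ S'.ncard := Set.ncard_image_le S'.toFinite
    rw [hcard] at h2
    exact h1.trans h2
  · obtain ⟨S, hXS, hPDS, hcard⟩ := Nat.sInf_mem hne1
    have h1 : pdNum (leafExt G X 2) ∅ ≤ (Sum.inl '' S).ncard :=
      Nat.sInf_le ⟨_, Set.empty_subset _, lift_pds hXS hPDS, rfl⟩
    rw [Set.ncard_image_of_injective _ Sum.inl_injective, hcard] at h1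
    exact h1
end

section
/- Let G be a connected graph of order n ≥ 3 and X ⊆ V(G). Then γ_P(G;X) ≤ ⌊(n + 2|X|)/3⌋. -/
/-!
Induction on a connected region `W`, in which vertices outside `W` count as already observed and
only vertices of `W` may force: every such region with `|W| + 2|X| ≥ 3` has a power dominating set
`S ⊇ X` with `3|S| ≤ |W| + 2|X|`. Components with at least three vertices are big, the others small.

If `X ≠ ∅`, take `X` together with such sets for the big components of `W \ X`, which cost a third
of their size; a small component touches `X`, so it is observed from `N[X]` once everything around
it is.

If `X = ∅`, it suffices to find a vertex `v` and a set `R ⊆ N[v]` (`IsCore G W v R`) such that the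
small components of `W \ R` get observed once `N[v]` and the big ones are, and at least three
vertices of `W` lie outside the big components: `v` pays for these three. Such `v` and `R` are
found at the end `w₀ w₁ w₂` of a longest path, where all neighbours of `w₀` beyond `w₂` lie in one
component of `W \ {w₀, w₁, w₂}`. If two vertices lie in small components of `W \ {w₀, w₁, w₂}`
seen by neither `w₀` nor `w₁`, they lie in small components of `W \ {w₂}` and `v = w₂`,
`R = {w₂}` works. If some component is a pair of neighbours of `w₀` not seen by `w₁`, then
`v = w₀` and `R = {w₀} ∪` that pair work. Otherwise `v = w₁` and `R = {w₀, w₁, w₂}` work, the small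
components not seen by `w₁` being forced by `w₀` or by `w₂`.
-/

namespace RPD

open SimpleGraph

variable {V : Type*} {G : SimpleGraph V}

/-- Zero forcing in which only vertices of `W` may force. It is run with everything outside `W`
already coloured, which lets a region be treated as a graph of its own. -/
inductive ForcedIn (G : SimpleGraph V) (W B : Set V) : V → Prop
  | init (v : V) (hv : v ∈ B) : ForcedIn G W B v
  | force (u w : V) (hu : ForcedIn G W B u) (huW : u ∈ W) (hadj : G.Adj u w)
      (hothers : ∀ x, G.Adj u x → x ≠ w → ForcedIn G W B x) : ForcedIn G W B w

def IsPDSOn (G : SimpleGraph V) (W S : Set V) : Prop :=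
  ∀ v ∈ W, ForcedIn G W (Wᶜ ∪ closedNbhd G S) v

namespace ForcedIn

variable {W W' B B' : Set V} {v : V}

lemma mono (hW : W ⊆ W') (hB : B ⊆ B') (h : ForcedIn G W B v) : ForcedIn G W' B' v := by
  induction h with
  | init v hv => exact .init v (hB hv)
  | force u w _ huW hadj _ ihu iho => exact .force u w ihu (hW huW) hadj iho

lemma toZFC (h : ForcedIn G W B v) : ZFC G B v := by
  induction h with
  | init v hv => exact .init v hv
  | force u w _ _ hadj _ ihu iho => exact .force u w ihu hadj iho

lemma of_forall_forcedIn (hB : ∀ b ∈ B', ForcedIn G W B b) (h : ForcedIn G W B' v) :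
    ForcedIn G W B v := by
  induction h with
  | init v hv => exact hB v hv
  | force u w _ huW hadj _ ihu iho => exact .force u w ihu huW hadj iho

lemma lift {K : Set V} (hKW : K ⊆ W) (hinit : ∀ x ∈ B' ∩ K, ForcedIn G W B x)
    (hbdry : ∀ u ∈ K, ∀ x, G.Adj u x → x ∉ K → ForcedIn G W B x)
    (h : ForcedIn G K B' v) (hv : v ∈ K) : ForcedIn G W B v := by
  induction h with
  | init v hv' => exact hinit v ⟨hv', hv⟩
  | force u w _ huK hadj _ ihu iho =>
    refine .force u w (ihu huK) (hKW huK) hadj fun x hx hxw => ?_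
    by_cases hxK : x ∈ K
    · exact iho x hx hxw hxK
    · exact hbdry u huK x hx hxK

end ForcedIn

lemma subset_closedNbhd {S : Set V} : S ⊆ closedNbhd G S := Set.subset_union_left

lemma closedNbhd_mono {S T : Set V} (h : S ⊆ T) : closedNbhd G S ⊆ closedNbhd G T :=
  Set.union_subset_union h fun _ ⟨u, hu, huv⟩ => ⟨u, h hu, huv⟩

lemma mem_closedNbhd_of_adj {S : Set V} {s v : V} (hs : s ∈ S) (h : G.Adj s v) :
    v ∈ closedNbhd G S :=
  Or.inr ⟨s, hs, h⟩

def induceOn (G : SimpleGraph V) (W : Set V) : SimpleGraph V :=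
  ((⊤ : G.Subgraph).induce W).spanningCoe

@[simp]
lemma induceOn_adj {W : Set V} {a b : V} :
    (induceOn G W).Adj a b ↔ a ∈ W ∧ b ∈ W ∧ G.Adj a b := by
  simp [induceOn]

def ConnectedOn (G : SimpleGraph V) (W : Set V) : Prop :=
  ∀ x ∈ W, ∀ y ∈ W, (induceOn G W).Reachable x y

def component (G : SimpleGraph V) (W : Set V) (x : V) : Set V :=
  {y | y ∈ W ∧ (induceOn G W).Reachable x y}

def bigPart (G : SimpleGraph V) (W R : Set V) : Set V :=
  {x | x ∈ W \ R ∧ 3 ≤ (component G (W \ R) x).ncard}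

section component

variable {W : Set V} {x y z : V}

lemma component_subset : component G W x ⊆ W := fun _ hy => hy.1

lemma mem_component_self (hx : x ∈ W) : x ∈ component G W x := ⟨hx, .rfl⟩

lemma mem_component_of_adj (hy : y ∈ component G W x) (hyz : G.Adj y z) (hz : z ∈ W) :
    z ∈ component G W x :=
  ⟨hz, hy.2.trans (induceOn_adj.2 ⟨hy.1, hz, hyz⟩).reachable⟩

lemma component_eq_of_mem (hy : y ∈ component G W x) : component G W y = component G W x := by
  ext z
  exact ⟨fun hz => ⟨hz.1, hy.2.trans hz.2⟩, fun hz => ⟨hz.1, hy.2.symm.trans hz.2⟩⟩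

lemma component_subset_of_closed {K : Set V} (hxK : x ∈ K)
    (hK : ∀ a ∈ K, ∀ b ∈ W, G.Adj a b → b ∈ K) : component G W x ⊆ K := by
  rintro y ⟨-, ⟨p⟩⟩
  induction p with
  | nil => exact hxK
  | cons h _ ih =>
    obtain ⟨-, hbW, hab⟩ := induceOn_adj.1 h
    exact ih (hK _ hxK _ hbW hab)

lemma connectedOn_component : ConnectedOn G (component G W x) := by
  have key : ∀ a ∈ component G W x, (induceOn G (component G W x)).Reachable a x := by
    intro a ha
    obtain ⟨p⟩ := ha.2.symm
    induction p with
    | nil => rfl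
    | cons h _ ih =>
      obtain ⟨-, hvW, huv⟩ := induceOn_adj.1 h
      have hv := mem_component_of_adj ha huv hvW
      exact (induceOn_adj.2 ⟨ha, hv, huv⟩).reachable.trans (ih hv)
  exact fun a ha b hb => (key a ha).trans (key b hb).symm

lemma exists_adj_of_connectedOn (hW : ConnectedOn G W) {X : Set V} (hXW : X ⊆ W) {x₀ : V}
    (hx₀ : x₀ ∈ X) (hx : x ∈ W \ X) : ∃ z ∈ component G (W \ X) x, ∃ a ∈ X, G.Adj z a := by
  suffices ∀ u (q : (induceOn G W).Walk u x₀), u ∈ component G (W \ X) x →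
      ∃ z ∈ component G (W \ X) x, ∃ a ∈ X, G.Adj z a from
    this x (hW x hx.1 x₀ (hXW hx₀)).some (mem_component_self hx)
  intro u q hu
  induction q with
  | nil => exact absurd hx₀ (component_subset hu).2
  | @cons u v _ h _ ih =>
    obtain ⟨-, hvW, huv⟩ := induceOn_adj.1 h
    by_cases hvX : v ∈ X
    · exact ⟨u, hu, v, hvX, huv⟩
    · exact ih hx₀ (mem_component_of_adj hu huv ⟨hvW, hvX⟩)

lemma mem_component_of_mem_support {a b : V} (p : G.Walk a b) (hp : ∀ v ∈ p.support, v ∈ W) :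
    ∀ v ∈ p.support, v ∈ component G W a := by
  induction p with
  | nil => simpa using mem_component_self (hp _ (by simp))
  | cons h p ih =>
    intro v hv
    have hpW : ∀ v ∈ p.support, v ∈ W := fun v hv => hp v (by simp [hv])
    have hstart := mem_component_of_adj (mem_component_self (hp _ (by simp))) h
      (hpW _ p.start_mem_support)
    rcases (by simpa using hv : v = _ ∨ v ∈ p.support) with rfl | hv
    · exact mem_component_self (hp _ (by simp))
    · exact component_eq_of_mem hstart ▸ ih hpW v hv

end component

lemma bigPart_subset {W R : Set V} : bigPart G W R ⊆ W := fun _ hx => hx.1.1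

lemma component_subset_bigPart {W R : Set V} {x : V} (hx : x ∈ bigPart G W R) :
    component G (W \ R) x ⊆ bigPart G W R := fun _ hy =>
  ⟨component_subset hy, (component_eq_of_mem hy).symm ▸ hx.2⟩

lemma forcedIn_of_isPDSOn_component {W R S T : Set V} {x : V} (hR : R ⊆ closedNbhd G S)
    (hTS : T ⊆ S) (hT : IsPDSOn G (component G (W \ R) x) T) :
    ∀ y ∈ component G (W \ R) x, ForcedIn G W (Wᶜ ∪ closedNbhd G S) y := by
  refine fun y hy => (hT y hy).lift (component_subset.trans Set.sdiff_subset) ?_ ?_ hy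
  · rintro t ⟨ht | ht, htK⟩
    · exact absurd htK ht
    · exact .init t (Or.inr (closedNbhd_mono hTS ht))
  · intro u hu t hut htK
    by_cases htW : t ∈ W
    · have htR : t ∈ R := by
        by_contra htR
        exact htK (mem_component_of_adj hu hut ⟨htW, htR⟩)
      exact .init t (Or.inr (hR htR))
    · exact .init t (Or.inl htW)

variable [Finite V]

lemma adj_of_mem_component_of_ncard_le_two {W : Set V} {x y z : V}
    (hsmall : (component G W x).ncard ≤ 2) (hz : z ∈ component G W x)
    (hy : y ∈ component G W x) (hyz : y ≠ z) :
    G.Adj z y ∧ ∀ t ∈ component G W x, t = z ∨ t = y := by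
  have hzy : ∀ t ∈ component G W x, t = z ∨ t = y := by
    intro t ht
    by_contra! h
    have := (Set.two_lt_ncard_iff (Set.toFinite _)).2
      ⟨z, y, t, hz, hy, ht, hyz.symm, h.1.symm, h.2.symm⟩
    omega
  refine ⟨?_, hzy⟩
  rw [← component_eq_of_mem hz] at hy
  obtain ⟨p⟩ := hy.2
  cases p with
  | nil => exact absurd rfl hyz
  | @cons _ t _ h _ =>
    obtain ⟨-, htW, hzt⟩ := induceOn_adj.1 h
    rcases hzy t (mem_component_of_adj hz hzt htW) with rfl | rfl
    · exact absurd hzt G.irrefl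
    · exact hzt

lemma ForcedIn.of_mem_small_component {W R B : Set V} {x z : V} (hWB : Wᶜ ⊆ B)
    (hR : ∀ r ∈ R, ForcedIn G W B r) (hsmall : (component G (W \ R) x).ncard ≤ 2)
    (hz : z ∈ component G (W \ R) x) (hzF : ForcedIn G W B z) :
    ∀ y ∈ component G (W \ R) x, ForcedIn G W B y := by
  intro y hy
  by_cases hyz : y = z
  · exact hyz ▸ hzF
  obtain ⟨hzy, hK⟩ := adj_of_mem_component_of_ncard_le_two hsmall hz hy hyz
  refine .force z y hzF (component_subset hz).1 hzy fun t hzt hty => ?_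
  by_cases htW : t ∈ W
  · by_cases htR : t ∈ R
    · exact hR t htR
    · rcases hK t (mem_component_of_adj hz hzt ⟨htW, htR⟩) with rfl | rfl
      · exact absurd hzt G.irrefl
      · exact absurd rfl hty
  · exact .init t (hWB htW)

lemma exists_forcedIn_of_subset_bigPart {W R S₀ : Set V} (hR : R ⊆ closedNbhd G S₀)
    (hbig : ∀ x ∈ bigPart G W R, ∃ T ⊆ component G (W \ R) x,
      3 * T.ncard ≤ (component G (W \ R) x).ncard ∧ IsPDSOn G (component G (W \ R) x) T)
    {P : Set V} (hPB : P ⊆ bigPart G W R) (hPcl : ∀ y ∈ P, component G (W \ R) y ⊆ P) :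
    ∃ T ⊆ P, 3 * T.ncard ≤ P.ncard ∧ ∀ y ∈ P, ForcedIn G W (Wᶜ ∪ closedNbhd G (S₀ ∪ T)) y := by
  induction hn : P.ncard using Nat.strong_induction_on generalizing P with
  | _ n ih =>
  subst hn
  rcases P.eq_empty_or_nonempty with rfl | ⟨x, hxP⟩
  · exact ⟨∅, by simp⟩
  obtain ⟨TK, hTK, hTKcard, hTKpds⟩ := hbig x (hPB hxP)
  set K := component G (W \ R) x
  have hxK : x ∈ K := mem_component_self (hPB hxP).1
  have hKP : K ⊆ P := hPcl x hxP
  have hsplit := Set.ncard_sdiff_add_ncard_of_subset hKP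
  have hKpos : 0 < K.ncard := (Set.ncard_pos (Set.toFinite _)).2 ⟨x, hxK⟩
  have hcl : ∀ y ∈ P \ K, component G (W \ R) y ⊆ P \ K := by
    refine fun y hy t ht => ⟨hPcl y hy.1 ht, fun htK => hy.2 ?_⟩
    have : component G (W \ R) t = K := component_eq_of_mem htK
    rw [← this, component_eq_of_mem ht]
    exact mem_component_self (hPB hy.1).1
  obtain ⟨T', hT', hT'card, hT'forced⟩ :=
    ih _ (by omega) (Set.sdiff_subset.trans hPB) hcl rfl
  refine ⟨T' ∪ TK, Set.union_subset (hT'.trans Set.sdiff_subset) (hTK.trans hKP),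
    by have := Set.ncard_union_le T' TK; omega, fun y hyP => ?_⟩
  by_cases hyK : y ∈ K
  · exact forcedIn_of_isPDSOn_component (hR.trans (closedNbhd_mono Set.subset_union_left))
      (Set.subset_union_right.trans Set.subset_union_right) hTKpds y hyK
  · exact (hT'forced y ⟨hyP, hyK⟩).mono subset_rfl (Set.union_subset_union_right _
      (closedNbhd_mono (Set.union_subset_union_right _ Set.subset_union_left)))

lemma exists_isPDSOn_of_core {W R S₀ : Set V} (hS₀W : S₀ ⊆ W) (hR : R ⊆ closedNbhd G S₀)
    (hbig : ∀ x ∈ bigPart G W R, ∃ T ⊆ component G (W \ R) x,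
      3 * T.ncard ≤ (component G (W \ R) x).ncard ∧ IsPDSOn G (component G (W \ R) x) T)
    (hend : ∀ x ∈ W, ForcedIn G W (Wᶜ ∪ closedNbhd G S₀ ∪ bigPart G W R) x) :
    ∃ S, S₀ ⊆ S ∧ S ⊆ W ∧ 3 * S.ncard ≤ 3 * S₀.ncard + (bigPart G W R).ncard ∧
      IsPDSOn G W S := by
  obtain ⟨T, hT, hTcard, hTforced⟩ := exists_forcedIn_of_subset_bigPart hR hbig subset_rfl
    fun _ hy => component_subset_bigPart hy
  refine ⟨S₀ ∪ T, Set.subset_union_left, Set.union_subset hS₀W (hT.trans bigPart_subset),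
    by have := Set.ncard_union_le S₀ T; omega, fun x hx => (hend x hx).of_forall_forcedIn ?_⟩
  rintro b ((hb | hb) | hb)
  · exact .init b (Or.inl hb)
  · exact .init b (Or.inr (closedNbhd_mono Set.subset_union_left hb))
  · exact hTforced b hb

lemma forcedIn_of_small_components_meet {W R S₀ : Set V} (hR : R ⊆ closedNbhd G S₀)
    (h : ∀ x ∈ W \ R, (component G (W \ R) x).ncard ≤ 2 →
      ∃ z ∈ component G (W \ R) x, z ∈ closedNbhd G S₀) :
    ∀ x ∈ W, ForcedIn G W (Wᶜ ∪ closedNbhd G S₀ ∪ bigPart G W R) x := by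
  intro x hx
  by_cases hxR : x ∈ R
  · exact .init x (Or.inl (Or.inr (hR hxR)))
  by_cases hbig : 3 ≤ (component G (W \ R) x).ncard
  · exact .init x (Or.inr ⟨⟨hx, hxR⟩, hbig⟩)
  obtain ⟨z, hz, hzN⟩ := h x ⟨hx, hxR⟩ (by omega)
  exact ForcedIn.of_mem_small_component (fun y hy => Or.inl (Or.inl hy))
    (fun r hr => .init r (Or.inl (Or.inr (hR hr)))) (by omega) hz
    (.init z (Or.inl (Or.inr hzN))) x (mem_component_self ⟨hx, hxR⟩)

lemma exists_path_three {W : Set V} (hW : ConnectedOn G W) (h3 : 3 ≤ W.ncard) :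
    ∃ a b c, a ∈ W ∧ b ∈ W ∧ c ∈ W ∧ G.Adj a b ∧ G.Adj b c ∧ a ≠ c := by
  obtain ⟨x, hx⟩ := Set.nonempty_of_ncard_ne_zero (s := W) (by omega)
  obtain ⟨y, hyW, hyx⟩ := Set.exists_ne_of_one_lt_ncard (s := W) (by omega) x
  obtain ⟨z, hz, a, ha, hza⟩ := exists_adj_of_connectedOn hW (Set.singleton_subset_iff.2 hx)
    rfl ⟨hyW, hyx⟩
  have hzx : G.Adj z x := Set.mem_singleton_iff.1 ha ▸ hza
  have hzW : z ∈ W := (component_subset hz).1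
  have hxz : x ≠ z := fun h => (component_subset hz).2 h.symm
  have hpair : ({x, z} : Set V) ⊆ W := Set.insert_subset hx (Set.singleton_subset_iff.2 hzW)
  obtain ⟨t, htW, htxz⟩ : (W \ {x, z}).Nonempty := by
    have := Set.ncard_sdiff_add_ncard_of_subset hpair
    rw [Set.ncard_pair hxz] at this
    exact Set.nonempty_of_ncard_ne_zero (by omega)
  obtain ⟨u, hu, a, ha, hua⟩ :=
    exists_adj_of_connectedOn hW hpair (Set.mem_insert x _) ⟨htW, htxz⟩
  obtain ⟨huW, hu'⟩ := component_subset hu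
  simp only [Set.mem_insert_iff, Set.mem_singleton_iff, not_or] at hu'
  rcases ha with rfl | rfl
  · exact ⟨u, a, z, huW, hx, hzW, hua, hzx.symm, hu'.2⟩
  · exact ⟨x, a, u, hx, hzW, huW, hzx.symm, hua.symm, Ne.symm hu'.1⟩

lemma exists_isPath_forall_adj_mem_support {W : Set V} (hW : ConnectedOn G W)
    (h3 : 3 ≤ W.ncard) :
    ∃ a b, ∃ p : G.Walk a b, p.IsPath ∧ (∀ v ∈ p.support, v ∈ W) ∧ 2 ≤ p.length ∧
      ∀ y ∈ W, G.Adj a y → y ∈ p.support := by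
  classical
  cases nonempty_fintype V
  let P n := ∃ a b, ∃ p : G.Walk a b, p.IsPath ∧ (∀ v ∈ p.support, v ∈ W) ∧ p.length = n
  have hlt : ∀ n, P n → n < Fintype.card V := by
    rintro n ⟨a, b, p, hp, -, rfl⟩
    exact hp.length_lt
  obtain ⟨a, b, c, ha, hb, hc, hab, hbc, hac⟩ := exists_path_three hW h3
  have h2 : P 2 := ⟨a, c, .cons hab (.cons hbc .nil), by simp [hab.ne, hbc.ne, hac], by
    simp [ha, hb, hc], rfl⟩
  -- a longest path in `W`
  obtain ⟨a, b, p, hp, hpW, hlen⟩ := Nat.findGreatest_spec (hlt 2 h2).le h2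
  refine ⟨a, b, p, hp, hpW, hlen ▸ Nat.le_findGreatest (hlt 2 h2).le h2, fun y hy hay => ?_⟩
  by_contra hyp
  have hq : P (p.length + 1) := ⟨y, b, .cons hay.symm p, hp.cons hyp, by simpa [hy] using hpW, rfl⟩
  have := Nat.le_findGreatest (hlt _ hq).le hq
  omega

structure IsPathEnd (G : SimpleGraph V) (W : Set V) (w₀ w₁ w₂ : V) : Prop where
  mem₀ : w₀ ∈ W
  mem₁ : w₁ ∈ W
  mem₂ : w₂ ∈ W
  adj₀₁ : G.Adj w₀ w₁
  adj₁₂ : G.Adj w₁ w₂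
  ne₀₂ : w₀ ≠ w₂
  far : ∀ y ∈ W \ {w₀, w₁, w₂}, ∀ y' ∈ W \ {w₀, w₁, w₂}, G.Adj w₀ y → G.Adj w₀ y' →
    y' ∈ component G (W \ {w₀, w₁, w₂}) y

/-- Take a path `w₀ w₁ w₂ …` in `W` that cannot be extended at `w₀`: the neighbours of `w₀` outside
`{w₀, w₁, w₂}` lie on its tail, which is connected in `W \ {w₀, w₁, w₂}`. -/
lemma exists_isPathEnd {W : Set V} (hW : ConnectedOn G W) (h3 : 3 ≤ W.ncard) :
    ∃ w₀ w₁ w₂, IsPathEnd G W w₀ w₁ w₂ := by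
  obtain ⟨a, b, p, hp, hpW, hlen, hext⟩ := exists_isPath_forall_adj_mem_support hW h3
  cases p with
  | nil => simp at hlen
  | @cons _ w₁ _ h01 p =>
  cases p with
  | nil => simp at hlen
  | @cons _ w₂ _ h12 q =>
  simp only [Walk.cons_isPath_iff, Walk.support_cons, List.mem_cons, not_or] at hp
  obtain ⟨⟨hq, hw₁q⟩, -, hw₀q⟩ := hp
  have hqW : ∀ v ∈ q.support, v ∈ W := fun v hv => hpW v (by simp [hv])
  refine ⟨a, w₁, w₂, hpW _ (by simp), hpW _ (by simp), hqW _ q.start_mem_support, h01, h12,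
    fun h => hw₀q (h ▸ q.start_mem_support), ?_⟩
  intro y hy y' hy' hay hay'
  simp only [Set.mem_sdiff, Set.mem_insert_iff, Set.mem_singleton_iff, not_or] at hy hy'
  have htail : ∀ z ∈ W, z ≠ a ∧ z ≠ w₁ ∧ z ≠ w₂ → G.Adj a z → z ∈ q.support.tail := by
    intro z hzW hz haz
    have := hext z hzW haz
    cases q <;> simp_all
  cases q with
  | nil => simpa using htail y hy.1 hy.2 hay
  | cons h23 q =>
  have hqA : ∀ v ∈ q.support, v ∈ W \ {a, w₁, w₂} := by
    intro v hv
    simp only [Walk.cons_isPath_iff] at hq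
    refine ⟨hqW v (by simp [hv]), ?_⟩
    simp only [Set.mem_insert_iff, Set.mem_singleton_iff, not_or]
    exact ⟨fun h => hw₀q (by simp [← h, hv]), fun h => hw₁q (by simp [← h, hv]),
      fun h => hq.2 (h ▸ hv)⟩
  have hcomp := mem_component_of_mem_support q hqA
  rw [component_eq_of_mem (hcomp y (by simpa using htail y hy.1 hy.2 hay))]
  exact hcomp y' (by simpa using htail y' hy'.1 hy'.2 hay')

def IsCore (G : SimpleGraph V) (W : Set V) (v : V) (R : Set V) : Prop :=
  R ⊆ closedNbhd G {v} ∧ 3 ≤ (W \ bigPart G W R).ncard ∧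
    ∀ x ∈ W, ForcedIn G W (Wᶜ ∪ closedNbhd G {v} ∪ bigPart G W R) x

def unseen (G : SimpleGraph V) (W A : Set V) (a b : V) : Set V :=
  {x | x ∈ W \ A ∧ (component G (W \ A) x).ncard ≤ 2 ∧
    ∀ z ∈ component G (W \ A) x, ¬ G.Adj a z ∧ ¬ G.Adj b z}

section PathEnd

variable {W : Set V} {w₀ w₁ w₂ : V}

lemma isCore_of_two_le_ncard_unseen (hW : ConnectedOn G W) (hw₂ : w₂ ∈ W)
    (hU : 2 ≤ (unseen G W {w₀, w₁, w₂} w₀ w₁).ncard) : IsCore G W w₂ {w₂} := by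
  set U := unseen G W {w₀, w₁, w₂} w₀ w₁
  refine ⟨subset_closedNbhd, ?_, forcedIn_of_small_components_meet subset_closedNbhd
    fun x hx _ => ?_⟩
  · have hw₂U : w₂ ∉ U := fun h => h.1.2 (by simp)
    have hsub : insert w₂ U ⊆ W \ bigPart G W {w₂} := by
      rintro x (rfl | hx)
      · exact ⟨hw₂, fun h => h.1.2 rfl⟩
      refine ⟨hx.1.1, fun hB => ?_⟩
      have hcl : component G (W \ {w₂}) x ⊆ component G (W \ {w₀, w₁, w₂}) x := by
        refine component_subset_of_closed (mem_component_self hx.1) fun a ha b hb hab => ?_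
        by_cases hbA : b ∈ ({w₀, w₁, w₂} : Set V)
        · rcases hbA with rfl | rfl | rfl
          · exact absurd hab.symm (hx.2.2 a ha).1
          · exact absurd hab.symm (hx.2.2 a ha).2
          · exact absurd rfl hb.2
        · exact mem_component_of_adj ha hab ⟨hb.1, hbA⟩
      have := (Set.ncard_le_ncard hcl (Set.toFinite _)).trans hx.2.1
      have := hB.2
      omega
    have := Set.ncard_le_ncard hsub (Set.toFinite _)
    rw [Set.ncard_insert_of_notMem hw₂U (Set.toFinite _)] at this
    omega
  · obtain ⟨z, hz, a, ha, hza⟩ :=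
      exists_adj_of_connectedOn hW (Set.singleton_subset_iff.2 hw₂) rfl hx
    exact ⟨z, hz, mem_closedNbhd_of_adj ha hza.symm⟩

lemma IsPathEnd.isCore_of_pair (hW : ConnectedOn G W) (h : IsPathEnd G W w₀ w₁ w₂) {y : V}
    (hy : y ∈ W \ {w₀, w₁, w₂}) (hK2 : (component G (W \ {w₀, w₁, w₂}) y).ncard = 2)
    (hK : ∀ z ∈ component G (W \ {w₀, w₁, w₂}) y, G.Adj w₀ z ∧ ¬ G.Adj w₁ z) :
    IsCore G W w₀ (insert w₀ (component G (W \ {w₀, w₁, w₂}) y)) := by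
  set K := component G (W \ {w₀, w₁, w₂}) y
  have hKA : ∀ z ∈ K, z ∈ W ∧ z ≠ w₀ ∧ z ≠ w₁ ∧ z ≠ w₂ := fun z hz => by
    simpa using component_subset hz
  have hRW : insert w₀ K ⊆ W := Set.insert_subset h.mem₀ fun z hz => (hKA z hz).1
  have hR : insert w₀ K ⊆ closedNbhd G {w₀} := by
    rintro z (rfl | hz)
    · exact subset_closedNbhd rfl
    · exact mem_closedNbhd_of_adj rfl (hK z hz).1
  refine ⟨hR, ?_, forcedIn_of_small_components_meet hR fun x hx _ => ?_⟩
  · have := Set.ncard_le_ncard (fun z hz => ⟨hRW hz, fun h => h.1.2 hz⟩ :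
      insert w₀ K ⊆ W \ bigPart G W (insert w₀ K)) (Set.toFinite _)
    rwa [Set.ncard_insert_of_notMem (fun h => (hKA w₀ h).2.1 rfl) (Set.toFinite _), hK2] at this
  refine ⟨w₁, ?_, mem_closedNbhd_of_adj rfl h.adj₀₁⟩
  have hw₁R : w₁ ∈ W \ insert w₀ K :=
    ⟨h.mem₁, by rintro (h' | h'); exacts [h.adj₀₁.ne h'.symm, (hKA w₁ h').2.2.1 rfl]⟩
  obtain ⟨z, hz, r, hr, hzr⟩ := exists_adj_of_connectedOn hW hRW (Set.mem_insert w₀ K) hx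
  obtain ⟨hzW, hzR⟩ := component_subset hz
  by_cases hzA : z ∈ ({w₀, w₁, w₂} : Set V)
  · rcases hzA with rfl | rfl | rfl
    · exact absurd (Set.mem_insert _ _) hzR
    · exact hz
    · exact mem_component_of_adj hz h.adj₁₂.symm hw₁R
  · refine absurd (Or.inr ?_) hzR
    rcases hr with rfl | hr
    · exact h.far y hy z ⟨hzW, hzA⟩ (hK y (mem_component_self hy)).1 hzr.symm
    · exact mem_component_of_adj hr hzr.symm ⟨hzW, hzA⟩

lemma IsPathEnd.forcedIn_of_notMem_unseen (h : IsPathEnd G W w₀ w₁ w₂)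
    (hpair : ∀ y ∈ W \ {w₀, w₁, w₂}, (component G (W \ {w₀, w₁, w₂}) y).ncard = 2 →
      ¬ ∀ z ∈ component G (W \ {w₀, w₁, w₂}) y, G.Adj w₀ z ∧ ¬ G.Adj w₁ z)
    (hAF : ∀ a ∈ ({w₀, w₁, w₂} : Set V),
      ForcedIn G W (Wᶜ ∪ closedNbhd G {w₁} ∪ bigPart G W {w₀, w₁, w₂}) a)
    {x : V} (hx : x ∈ W \ {w₀, w₁, w₂}) (hxU : x ∉ unseen G W {w₀, w₁, w₂} w₀ w₁) :
    ForcedIn G W (Wᶜ ∪ closedNbhd G {w₁} ∪ bigPart G W {w₀, w₁, w₂}) x := by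
  set A : Set V := {w₀, w₁, w₂}
  have hWF : Wᶜ ⊆ Wᶜ ∪ closedNbhd G {w₁} ∪ bigPart G W A := fun t ht => Or.inl (Or.inl ht)
  by_cases hbig : 3 ≤ (component G (W \ A) x).ncard
  · exact .init x (Or.inr ⟨hx, hbig⟩)
  have hsmall : (component G (W \ A) x).ncard ≤ 2 := by omega
  have hxK : x ∈ component G (W \ A) x := mem_component_self hx
  by_cases h₁ : ∃ z ∈ component G (W \ A) x, G.Adj w₁ z
  · obtain ⟨z, hz, hw₁z⟩ := h₁
    exact ForcedIn.of_mem_small_component hWF hAF hsmall hz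
      (.init z (Or.inl (Or.inr (mem_closedNbhd_of_adj rfl hw₁z)))) x hxK
  obtain ⟨t, ht, hw₀t⟩ : ∃ z ∈ component G (W \ A) x, G.Adj w₀ z := by
    by_contra! h₀
    exact hxU ⟨hx, hsmall, fun z hz => ⟨h₀ z hz, fun h' => h₁ ⟨z, hz, h'⟩⟩⟩
  refine ForcedIn.of_mem_small_component hWF hAF hsmall ht ?_ x hxK
  refine .force w₀ t (hAF w₀ (Set.mem_insert _ _)) h.mem₀ hw₀t fun s hw₀s hst => ?_
  by_cases hsW : s ∈ W
  · by_cases hsA : s ∈ A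
    · exact hAF s hsA
    -- a second neighbour of `w₀` in this component would make it a pair excluded by `hpair`
    have hs : s ∈ component G (W \ A) x :=
      component_eq_of_mem ht ▸ h.far t (component_subset ht) s ⟨hsW, hsA⟩ hw₀t hw₀s
    obtain ⟨-, hK⟩ := adj_of_mem_component_of_ncard_le_two hsmall ht hs hst
    have h2 : 1 < (component G (W \ A) x).ncard :=
      (Set.one_lt_ncard_iff (Set.toFinite _)).2 ⟨s, t, hs, ht, hst⟩
    refine absurd (fun z hz => ?_) (hpair x hx (by omega))
    rcases hK z hz with rfl | rfl
    · exact ⟨hw₀t, fun h' => h₁ ⟨_, hz, h'⟩⟩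
    · exact ⟨hw₀s, fun h' => h₁ ⟨_, hz, h'⟩⟩
  · exact .init s (hWF hsW)

lemma IsPathEnd.isCore_of_ncard_unseen_le_one (hW : ConnectedOn G W)
    (h : IsPathEnd G W w₀ w₁ w₂) (hU : (unseen G W {w₀, w₁, w₂} w₀ w₁).ncard ≤ 1)
    (hpair : ∀ y ∈ W \ {w₀, w₁, w₂}, (component G (W \ {w₀, w₁, w₂}) y).ncard = 2 →
      ¬ ∀ z ∈ component G (W \ {w₀, w₁, w₂}) y, G.Adj w₀ z ∧ ¬ G.Adj w₁ z) :
    IsCore G W w₁ {w₀, w₁, w₂} := by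
  set A : Set V := {w₀, w₁, w₂}
  set U := unseen G W A w₀ w₁
  have hAW : A ⊆ W := by rintro z (rfl | rfl | rfl); exacts [h.mem₀, h.mem₁, h.mem₂]
  have hAN : A ⊆ closedNbhd G {w₁} := by
    rintro z (rfl | rfl | rfl)
    · exact mem_closedNbhd_of_adj rfl h.adj₀₁.symm
    · exact subset_closedNbhd rfl
    · exact mem_closedNbhd_of_adj rfl h.adj₁₂
  refine ⟨hAN, ?_, fun x hx => ?_⟩
  · have := Set.ncard_le_ncard (fun z hz => ⟨hAW hz, fun h => h.1.2 hz⟩ :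
      A ⊆ W \ bigPart G W A) (Set.toFinite _)
    rwa [Set.ncard_eq_three.2 ⟨w₀, w₁, w₂, h.adj₀₁.ne, h.ne₀₂, h.adj₁₂.ne, rfl⟩] at this
  have hAF : ∀ a ∈ A, ForcedIn G W (Wᶜ ∪ closedNbhd G {w₁} ∪ bigPart G W A) a :=
    fun a ha => .init a (Or.inl (Or.inr (hAN ha)))
  by_cases hxA : x ∈ A
  · exact hAF x hxA
  by_cases hxU : x ∉ U
  · exact h.forcedIn_of_notMem_unseen hpair hAF ⟨hx, hxA⟩ hxU
  rw [not_not] at hxU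
  have hUx : ∀ u ∈ U, u = x := fun u hu => by
    by_contra hne
    have := (Set.one_lt_ncard_iff (Set.toFinite _)).2 ⟨u, x, hu, hxU, hne⟩
    omega
  obtain ⟨z, hz, a, ha, hza⟩ := exists_adj_of_connectedOn hW hAW (Set.mem_insert _ _) ⟨hx, hxA⟩
  obtain rfl : z = x := hUx z ⟨component_subset hz, by rw [component_eq_of_mem hz]; exact hxU.2⟩
  have hw₂z : G.Adj w₂ z := by
    rcases ha with rfl | rfl | rfl
    · exact absurd hza.symm (hxU.2.2 z hz).1
    · exact absurd hza.symm (hxU.2.2 z hz).2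
    · exact hza.symm
  refine .force w₂ z (hAF w₂ (by simp [A])) h.mem₂ hw₂z fun s hw₂s hsz => ?_
  by_cases hsW : s ∈ W
  · by_cases hsA : s ∈ A
    · exact hAF s hsA
    · exact h.forcedIn_of_notMem_unseen hpair hAF ⟨hsW, hsA⟩ fun hsU => hsz (hUx s hsU)
  · exact .init s (Or.inl (Or.inl hsW))

end PathEnd

lemma exists_isCore {W : Set V} (hW : ConnectedOn G W) (h3 : 3 ≤ W.ncard) :
    ∃ v ∈ W, ∃ R, IsCore G W v R := by
  obtain ⟨w₀, w₁, w₂, h⟩ := exists_isPathEnd hW h3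
  by_cases hU : 2 ≤ (unseen G W {w₀, w₁, w₂} w₀ w₁).ncard
  · exact ⟨w₂, h.mem₂, _, isCore_of_two_le_ncard_unseen hW h.mem₂ hU⟩
  by_cases hpair : ∃ y ∈ W \ {w₀, w₁, w₂}, (component G (W \ {w₀, w₁, w₂}) y).ncard = 2 ∧
      ∀ z ∈ component G (W \ {w₀, w₁, w₂}) y, G.Adj w₀ z ∧ ¬ G.Adj w₁ z
  · obtain ⟨y, hy, hK2, hK⟩ := hpair
    exact ⟨w₀, h.mem₀, _, h.isCore_of_pair hW hy hK2 hK⟩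
  · exact ⟨w₁, h.mem₁, _, h.isCore_of_ncard_unseen_le_one hW (by omega)
      fun y hy hK2 hK => hpair ⟨y, hy, hK2, hK⟩⟩

theorem exists_isPDSOn (W X : Set V) (hXW : X ⊆ W) (hW : ConnectedOn G W)
    (h3 : 3 ≤ W.ncard + 2 * X.ncard) :
    ∃ S, X ⊆ S ∧ S ⊆ W ∧ 3 * S.ncard ≤ W.ncard + 2 * X.ncard ∧ IsPDSOn G W S := by
  induction hn : W.ncard using Nat.strong_induction_on generalizing W X with
  | _ n ih =>
  subst hn
  have hbig : ∀ R, (W \ bigPart G W R).Nonempty → ∀ x ∈ bigPart G W R,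
      ∃ T ⊆ component G (W \ R) x, 3 * T.ncard ≤ (component G (W \ R) x).ncard ∧
        IsPDSOn G (component G (W \ R) x) T := by
    rintro R ⟨y, hyW, hyB⟩ x hx
    have hlt : (component G (W \ R) x).ncard < W.ncard :=
      (Set.ncard_le_ncard (component_subset_bigPart hx)).trans_lt
        (Set.ncard_lt_ncard ⟨bigPart_subset, fun h => hyB (h hyW)⟩)
    obtain ⟨T, -, hTK, hTcard, hT⟩ := ih _ hlt _ ∅ (Set.empty_subset _) connectedOn_component
      (by simpa using hx.2) rfl
    exact ⟨T, hTK, by simpa using hTcard, hT⟩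
  rcases X.eq_empty_or_nonempty with rfl | ⟨x₀, hx₀⟩
  · simp only [Set.ncard_empty, mul_zero, add_zero] at h3 ⊢
    obtain ⟨v, hv, R, hR, hcard, hend⟩ := exists_isCore hW h3
    obtain ⟨S, -, hSW, hScard, hS⟩ := exists_isPDSOn_of_core (Set.singleton_subset_iff.2 hv) hR
      (hbig R (Set.nonempty_of_ncard_ne_zero (by omega))) hend
    rw [Set.ncard_singleton] at hScard
    have := Set.ncard_sdiff_add_ncard_of_subset (bigPart_subset (G := G) (W := W) (R := R))
    exact ⟨S, Set.empty_subset _, hSW, by omega, hS⟩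
  · have hend := forcedIn_of_small_components_meet (G := G) (W := W) subset_closedNbhd
      fun x hx _ => by
        obtain ⟨z, hz, a, ha, hza⟩ := exists_adj_of_connectedOn hW hXW hx₀ hx
        exact ⟨z, hz, mem_closedNbhd_of_adj ha hza.symm⟩
    obtain ⟨S, hXS, hSW, hScard, hS⟩ := exists_isPDSOn_of_core hXW subset_closedNbhd
      (hbig X ⟨x₀, hXW hx₀, fun h => h.1.2 hx₀⟩) hend
    have h1 : (bigPart G W X).ncard ≤ (W \ X).ncard := Set.ncard_le_ncard fun y hy => hy.1
    have h2 := Set.ncard_sdiff_add_ncard_of_subset hXW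
    exact ⟨S, hXS, hSW, by omega, hS⟩

end RPD

open RPD

theorem stmt8 {V : Type*} [Fintype V] (G : SimpleGraph V) (hconn : G.Connected)
    (hn : 3 ≤ Fintype.card V) (X : Set V) :
    pdNum G X ≤ (Fintype.card V + 2 * X.ncard) / 3 := by
  have hW : ConnectedOn G Set.univ := fun x _ y _ =>
    (hconn.preconnected x y).mono fun a b h => by simpa using h
  obtain ⟨S, hXS, -, hcard, hS⟩ := exists_isPDSOn Set.univ X (Set.subset_univ X) hW
    (by rw [Set.ncard_univ, Nat.card_eq_fintype_card]; omega)
  have hPDS : IsPDS G S := fun v => by simpa using (hS v (Set.mem_univ v)).toZFC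
  have hle : pdNum G X ≤ S.ncard := Nat.sInf_le ⟨S, hXS, hPDS, rfl⟩
  rw [Set.ncard_univ, Nat.card_eq_fintype_card] at hcard
  exact hle.trans ((Nat.le_div_iff_mul_le (by norm_num)).2 (by omega))
end

section
/- Let G' be a graph, V ⊂ V(G'), G = G'[V] the induced subgraph, S a power dominating set of G, and t the number of isolated vertices of the induced subgraph G'[V'∖V]. Then γ_P(G';S) ≤ |S| + |V'∖V|/2 + t/2. -/
open RPD

/-- Ore-style bound with isolated vertices: every finite graph has a dominating set `D`
with `2|D| ≤ n + t` where `t` is the number of isolated vertices. -/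
lemma ore_dom {W : Type*} [Finite W] (H : SimpleGraph W) :
    ∃ D : Set W, (∀ v, v ∈ D ∨ ∃ u ∈ D, H.Adj u v) ∧
      2 * D.ncard ≤ Nat.card W + {v | ∀ u, ¬ H.Adj v u}.ncard := by
  classical
  set Dom : Set W → Prop := fun D => ∀ v, v ∈ D ∨ ∃ u ∈ D, H.Adj u v with hDom
  have huniv : Dom Set.univ := fun v => Or.inl (Set.mem_univ v)
  have hne : {n | ∃ D, Dom D ∧ D.ncard = n}.Nonempty := ⟨_, Set.univ, huniv, rfl⟩
  obtain ⟨D, hD, hDcard⟩ := Nat.sInf_mem hne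
  set m := sInf {n | ∃ D, Dom D ∧ D.ncard = n} with hm
  set I : Set W := {v | ∀ u, ¬ H.Adj v u} with hI
  -- every non-isolated vertex of D has a neighbor outside D
  have key : ∀ v ∈ D, v ∈ I ∨ ∃ u, H.Adj v u ∧ u ∉ D := by
    intro v hv
    by_contra hcon
    push_neg at hcon
    obtain ⟨hvI, hnbr⟩ := hcon
    simp only [hI, Set.mem_setOf_eq, not_forall, not_not] at hvI
    obtain ⟨w, hw⟩ := hvI
    have hwD : w ∈ D := hnbr w hw
    have hdom' : Dom (D \ {v}) := by
      intro u
      rcases hD u with hu | ⟨d, hd, hadj⟩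
      · by_cases huv : u = v
        · subst huv
          refine Or.inr ⟨w, ⟨hwD, ?_⟩, hw.symm⟩
          simp only [Set.mem_singleton_iff]
          rintro rfl
          exact H.ne_of_adj hw rfl
        · exact Or.inl ⟨hu, huv⟩
      · by_cases hdv : d = v
        · subst hdv
          have huD : u ∈ D := hnbr u hadj
          refine Or.inl ⟨huD, ?_⟩
          simp only [Set.mem_singleton_iff]
          rintro rfl
          exact H.ne_of_adj hadj rfl
        · exact Or.inr ⟨d, ⟨hd, hdv⟩, hadj⟩
    have hlt : (D \ {v}).ncard < D.ncard :=
      Set.ncard_diff_singleton_lt_of_mem hv (Set.toFinite D)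
    have : m ≤ (D \ {v}).ncard := Nat.sInf_le ⟨D \ {v}, hdom', rfl⟩
    omega
  -- the alternative dominating set
  set D' : Set W := I ∪ Dᶜ with hD'
  have hdomD' : Dom D' := by
    intro v
    by_cases hvD : v ∈ D
    · rcases key v hvD with hvI | ⟨u, hadj, huD⟩
      · exact Or.inl (Or.inl hvI)
      · exact Or.inr ⟨u, Or.inr huD, hadj.symm⟩
    · exact Or.inl (Or.inr hvD)
  have hcardD' : D'.ncard ≤ I.ncard + Dᶜ.ncard := Set.ncard_union_le _ _
  have hcompl : D.ncard + Dᶜ.ncard = Nat.card W := by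
    rw [Set.ncard_add_ncard_compl]
  by_cases hcase : 2 * D.ncard ≤ Nat.card W + I.ncard
  · exact ⟨D, hD, hcase⟩
  · exact ⟨D', hdomD', by omega⟩

/-- Zero forcing transfers from an induced subgraph to the whole graph once the
complement of the vertex set is entirely blue. -/
lemma zfc_transfer {V' : Type*} (G' : SimpleGraph V') (Vs : Set V') (B₀ : Set ↥Vs)
    (B : Set V') (hB0 : ∀ w : ↥Vs, w ∈ B₀ → (w : V') ∈ B)
    (hVc : ∀ v, v ∉ Vs → v ∈ B) :
    ∀ w : ↥Vs, ZFC (G'.induce Vs) B₀ w → ZFC G' B (w : V') := by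
  intro w hw
  induction hw with
  | init v hv => exact ZFC.init _ (hB0 v hv)
  | force u w hu hadj hothers ihu ihothers =>
    refine ZFC.force (u : V') (w : V') ihu hadj ?_
    intro x hx hne
    by_cases hxV : x ∈ Vs
    · exact ihothers ⟨x, hxV⟩ hx (fun h => hne (congrArg Subtype.val h))
    · exact ZFC.init _ (hVc x hxV)

theorem stmt10 {V' : Type*} [Finite V'] (G' : SimpleGraph V') (Vs : Set V')
    (hproper : Vs ⊂ Set.univ) (S : Set V') (hSV : S ⊆ Vs)
    (hS : IsPDS (G'.induce Vs) (Subtype.val ⁻¹' S)) :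
    (pdNum G' S : ℚ) ≤ (S.ncard : ℚ) + ((Vsᶜ : Set V').ncard : ℚ) / 2 +
      (({v : ↥(Vsᶜ) | ∀ u, ¬ (G'.induce Vsᶜ).Adj v u}.ncard : ℚ)) / 2 := by
  classical
  obtain ⟨D, hDdom, hDcard⟩ := ore_dom (G'.induce Vsᶜ)
  set T : Set V' := Subtype.val '' D with hT
  set B : Set V' := closedNbhd G' (S ∪ T) with hB
  -- the complement of Vs is blue
  have hVc : ∀ v, v ∉ Vs → v ∈ B := by
    intro v hv
    rcases hDdom ⟨v, hv⟩ with hmem | ⟨u, hu, hadj⟩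
    · exact Or.inl (Or.inr ⟨⟨v, hv⟩, hmem, rfl⟩)
    · exact Or.inr ⟨(u : V'), Or.inr ⟨u, hu, rfl⟩, hadj⟩
  -- the image of the closed neighborhood of S in the induced graph is blue
  have hB0 : ∀ w : ↥Vs, w ∈ closedNbhd (G'.induce Vs) (Subtype.val ⁻¹' S) → (w : V') ∈ B := by
    rintro w (hw | ⟨u, hu, hadj⟩)
    · exact Or.inl (Or.inl hw)
    · exact Or.inr ⟨(u : V'), Or.inl hu, hadj⟩
  have hPDS : IsPDS G' (S ∪ T) := by
    intro v
    by_cases hv : v ∈ Vs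
    · exact zfc_transfer G' Vs _ B hB0 hVc ⟨v, hv⟩ (hS ⟨v, hv⟩)
    · exact ZFC.init _ (hVc v hv)
  have hub : pdNum G' S ≤ (S ∪ T).ncard :=
    Nat.sInf_le ⟨S ∪ T, Set.subset_union_left, hPDS, rfl⟩
  have hTcard : T.ncard = D.ncard := Set.ncard_image_of_injective _ Subtype.val_injective
  have hunion : (S ∪ T).ncard ≤ S.ncard + D.ncard := by
    rw [← hTcard]; exact Set.ncard_union_le _ _
  have hcoe : Nat.card ↥(Vsᶜ) = (Vsᶜ : Set V').ncard := Nat.card_coe_set_eq _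
  have h1 : pdNum G' S ≤ S.ncard + D.ncard := le_trans hub hunion
  have h2 : 2 * D.ncard ≤ (Vsᶜ : Set V').ncard +
      {v : ↥(Vsᶜ) | ∀ u, ¬ (G'.induce Vsᶜ).Adj v u}.ncard := by
    rw [← hcoe]; exact hDcard
  have hq1 : (pdNum G' S : ℚ) ≤ (S.ncard : ℚ) + (D.ncard : ℚ) := by exact_mod_cast h1
  have hq2 : 2 * (D.ncard : ℚ) ≤ ((Vsᶜ : Set V').ncard : ℚ) +
      ({v : ↥(Vsᶜ) | ∀ u, ¬ (G'.induce Vsᶜ).Adj v u}.ncard : ℚ) := by exact_mod_cast h2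
  linarith
end

section
/- Let G=(V,E) be a graph with a vertex partition V = V₁ ∪ V₂, let N₁ = N[V₂] ∩ V₁ and N₂ = N[V₁] ∩ V₂, let G₁ = G[V₁] and G₂ = G[V₂], and let W₁ ⊆ V₁, W₂ ⊆ V₂ be such that W₁ ∪ W₂ dominates N₁ ∪ N₂ in G. Then γ_P(G) ≤ γ_P(G; W₁∪W₂) ≤ γ_P(G₁;W₁) + γ_P(G₂;W₂). -/
open RPD

lemma closedNbhd_mono {V : Type*} (G : SimpleGraph V) {A B : Set V} (h : A ⊆ B) :
    closedNbhd G A ⊆ closedNbhd G B := by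
  rintro v (hv | ⟨u, hu, hadj⟩)
  · exact Or.inl (h hv)
  · exact Or.inr ⟨u, h hu, hadj⟩

lemma pdSet_nonempty {V : Type*} (G : SimpleGraph V) (X : Set V) :
    {n | ∃ S : Set V, X ⊆ S ∧ IsPDS G S ∧ S.ncard = n}.Nonempty :=
  ⟨(Set.univ : Set V).ncard, Set.univ, Set.subset_univ _,
    fun v => ZFC.init v (Or.inl (Set.mem_univ v)), rfl⟩

lemma zfc_lift {V : Type*} (G : SimpleGraph V) (V₁ : Set V) (B₁ : Set ↥V₁) (B : Set V)
    (hB₁ : ∀ v : ↥V₁, v ∈ B₁ → (v : V) ∈ B)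
    (hext : ∀ u x : V, u ∈ V₁ → G.Adj u x → x ∉ V₁ → x ∈ B)
    (v : ↥V₁) (hv : ZFC (G.induce V₁) B₁ v) : ZFC G B (v : V) := by
  induction hv with
  | init v hv => exact ZFC.init _ (hB₁ v hv)
  | force u w hu hadj hothers ihu ihothers =>
    refine ZFC.force (u : V) (w : V) ihu hadj ?_
    intro x hadjx hne
    by_cases hx : x ∈ V₁
    · exact ihothers ⟨x, hx⟩ hadjx (fun h => hne (congrArg Subtype.val h))
    · exact ZFC.init _ (hext u x u.2 hadjx hx)

theorem stmt13 {V : Type*} [Finite V] (G : SimpleGraph V) (V₁ V₂ : Set V)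
    (hcover : V₁ ∪ V₂ = Set.univ) (hdisj : V₁ ∩ V₂ = ∅)
    (W₁ W₂ : Set V) (hW₁ : W₁ ⊆ V₁) (hW₂ : W₂ ⊆ V₂)
    (hdom : (closedNbhd G V₂ ∩ V₁) ∪ (closedNbhd G V₁ ∩ V₂) ⊆ closedNbhd G (W₁ ∪ W₂)) :
    pdNum G ∅ ≤ pdNum G (W₁ ∪ W₂) ∧
      pdNum G (W₁ ∪ W₂) ≤
        pdNum (G.induce V₁) (Subtype.val ⁻¹' W₁) +
          pdNum (G.induce V₂) (Subtype.val ⁻¹' W₂) := by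
  constructor
  · obtain ⟨S, hXS, hPDS, hcard⟩ := Nat.sInf_mem (pdSet_nonempty G (W₁ ∪ W₂))
    exact Nat.sInf_le ⟨S, Set.empty_subset S, hPDS, hcard⟩
  · obtain ⟨S₁, hX₁, hPDS₁, hcard₁⟩ :=
      Nat.sInf_mem (pdSet_nonempty (G.induce V₁) (Subtype.val ⁻¹' W₁))
    obtain ⟨S₂, hX₂, hPDS₂, hcard₂⟩ :=
      Nat.sInf_mem (pdSet_nonempty (G.induce V₂) (Subtype.val ⁻¹' W₂))
    set S : Set V := Subtype.val '' S₁ ∪ Subtype.val '' S₂ with hS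
    have hWS : W₁ ∪ W₂ ⊆ S := by
      rintro w (hw | hw)
      · exact Or.inl ⟨⟨w, hW₁ hw⟩, hX₁ hw, rfl⟩
      · exact Or.inr ⟨⟨w, hW₂ hw⟩, hX₂ hw, rfl⟩
    have hdomS : closedNbhd G (W₁ ∪ W₂) ⊆ closedNbhd G S := closedNbhd_mono G hWS
    -- lifting closed neighborhoods
    have hB₁ : ∀ v : ↥V₁, v ∈ closedNbhd (G.induce V₁) S₁ → (v : V) ∈ closedNbhd G S := by
      rintro v (hv | ⟨u, hu, hadj⟩)
      · exact Or.inl (Or.inl ⟨v, hv, rfl⟩)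
      · exact Or.inr ⟨u, Or.inl ⟨u, hu, rfl⟩, hadj⟩
    have hB₂ : ∀ v : ↥V₂, v ∈ closedNbhd (G.induce V₂) S₂ → (v : V) ∈ closedNbhd G S := by
      rintro v (hv | ⟨u, hu, hadj⟩)
      · exact Or.inl (Or.inr ⟨v, hv, rfl⟩)
      · exact Or.inr ⟨u, Or.inr ⟨u, hu, rfl⟩, hadj⟩
    have hmem2 : ∀ x : V, x ∉ V₁ → x ∈ V₂ := by
      intro x hx
      have : x ∈ V₁ ∪ V₂ := hcover ▸ Set.mem_univ x
      exact this.resolve_left hx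
    have hmem1 : ∀ x : V, x ∉ V₂ → x ∈ V₁ := by
      intro x hx
      have : x ∈ V₁ ∪ V₂ := hcover ▸ Set.mem_univ x
      exact this.resolve_right hx
    have hext₁ : ∀ u x : V, u ∈ V₁ → G.Adj u x → x ∉ V₁ → x ∈ closedNbhd G S := by
      intro u x hu hadj hx
      exact hdomS (hdom (Or.inr ⟨Or.inr ⟨u, hu, hadj⟩, hmem2 x hx⟩))
    have hext₂ : ∀ u x : V, u ∈ V₂ → G.Adj u x → x ∉ V₂ → x ∈ closedNbhd G S := by
      intro u x hu hadj hx
      exact hdomS (hdom (Or.inl ⟨Or.inr ⟨u, hu, hadj⟩, hmem1 x hx⟩))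
    have hPDS : IsPDS G S := by
      intro v
      by_cases hv : v ∈ V₁
      · exact zfc_lift G V₁ _ _ hB₁ hext₁ ⟨v, hv⟩ (hPDS₁ ⟨v, hv⟩)
      · exact zfc_lift G V₂ _ _ hB₂ hext₂ ⟨v, hmem2 v hv⟩ (hPDS₂ ⟨v, hmem2 v hv⟩)
    have h1 : pdNum G (W₁ ∪ W₂) ≤ S.ncard := Nat.sInf_le ⟨S, hWS, hPDS, rfl⟩
    refine h1.trans ?_
    calc S.ncard ≤ (Subtype.val '' S₁).ncard + (Subtype.val '' S₂).ncard :=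
          Set.ncard_union_le _ _
      _ = S₁.ncard + S₂.ncard := by
          rw [Set.ncard_image_of_injective _ Subtype.val_injective,
            Set.ncard_image_of_injective _ Subtype.val_injective]
      _ = _ := by rw [hcard₁, hcard₂]; rfl
end

section
/- Let G' be a graph, V ⊂ V(G'), G = G'[V], H₁,…,H_k the connected components of G'[V'∖V], and B a zero forcing set of G. For each i, let N_i = N_{G'}[V] ∩ V(H_i). Then Z(G';B) ≤ Σᵢ Z(H_i;N_i) + |B|. -/
/-!
Color `B` together with a minimum zero forcing set `B_c` of each component `H_c` of
`G'[V'∖V]` containing `N_c`. Every vertex outside `V` adjacent to `V` lies in some `N_c`, so it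
is colored from the start, and the forces of `B` in `G'[V]` remain valid in `G'`. Once `V` is
colored, the only neighbors of `H_c` outside `H_c` are colored, so the forces of `B_c` in `H_c`
also remain valid in `G'`.
-/

theorem Set.ncard_iUnion_le_finsum {ι α : Type*} [Finite ι] (s : ι → Set α) :
    (⋃ i, s i).ncard ≤ ∑ᶠ i, (s i).ncard := by
  have := Fintype.ofFinite ι
  simpa [finsum_eq_sum_of_fintype] using Finset.univ.set_ncard_biUnion_le s

namespace RPD

variable {V : Type*} {G : SimpleGraph V}

theorem zNum_le_ncard {X B : Set V} (hXB : X ⊆ B) (hB : IsZFS G B) : zNum G X ≤ B.ncard :=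
  Nat.sInf_le ⟨B, hXB, hB, rfl⟩

theorem exists_isZFS_ncard_eq_zNum (G : SimpleGraph V) (X : Set V) :
    ∃ B, X ⊆ B ∧ IsZFS G B ∧ B.ncard = zNum G X :=
  Nat.sInf_mem (s := {n | ∃ B : Set V, X ⊆ B ∧ IsZFS G B ∧ B.ncard = n})
    ⟨Set.univ.ncard, Set.univ, Set.subset_univ X, fun v => ZFC.init v trivial, rfl⟩

theorem ZFC.of_induce {S : Set V} {C : Set S} {B : Set V} (hC : ∀ x ∈ C, ZFC G B x)
    (hout : ∀ u ∈ S, ∀ x ∉ S, G.Adj u x → ZFC G B x) {v : S}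
    (hv : ZFC (G.induce S) C v) : ZFC G B v := by
  induction hv with
  | init x hx => exact hC x hx
  | force u w _ hadj _ ihu ihothers =>
    refine ZFC.force (u : V) (w : V) ihu hadj fun y hy hyw => ?_
    by_cases hyS : y ∈ S
    · exact ihothers ⟨y, hyS⟩ hy fun h => hyw (congrArg Subtype.val h)
    · exact hout u u.2 y hyS hy

theorem isZFS_union_iUnion_components {S B : Set V} (hB : IsZFS (G.induce S) (Subtype.val ⁻¹' B))
    (Bc : ∀ c : (G.induce Sᶜ).ConnectedComponent, Set c.supp)
    (hBc : ∀ c, IsZFS ((G.induce Sᶜ).induce c.supp) (Bc c))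
    (hN : ∀ c, (fun x : c.supp => ((x : ↥Sᶜ) : V)) ⁻¹' closedNbhd G S ⊆ Bc c) :
    IsZFS G (B ∪ ⋃ c, (fun x : c.supp => ((x : ↥Sᶜ) : V)) '' Bc c) := by
  set B' := B ∪ ⋃ c, (fun x : c.supp => ((x : ↥Sᶜ) : V)) '' Bc c
  have hBc_sub : ∀ c, ∀ x ∈ Bc c, ((x : ↥Sᶜ) : V) ∈ B' :=
    fun c x hx => Or.inr (Set.mem_iUnion.2 ⟨c, x, hx, rfl⟩)
  have hS : ∀ v : S, ZFC G B' v := fun v =>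
    (hB v).of_induce (fun x hx => ZFC.init (x : V) (Or.inl hx)) fun u hu x hx hadj =>
      ZFC.init x (hBc_sub _ ⟨⟨x, hx⟩, rfl⟩ (hN _ (Or.inr ⟨u, hu, hadj⟩)))
  have hSc : ∀ v : ↥Sᶜ, ZFC G B' v := by
    intro v
    set c := (G.induce Sᶜ).connectedComponentMk v
    have hv : ZFC (G.induce Sᶜ) (Subtype.val ⁻¹' B') v :=
      (hBc c ⟨v, rfl⟩).of_induce (fun (x : c.supp) hx => ZFC.init (x : ↥Sᶜ) (hBc_sub c x hx))
        fun u hu x hx hadj => absurd (c.mem_supp_of_adj_mem_supp hu hadj) hx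
    exact hv.of_induce (fun x hx => ZFC.init (x : V) hx) fun _ _ x hx _ => hS ⟨x, not_not.1 hx⟩
  intro v
  by_cases hv : v ∈ S
  · exact hS ⟨v, hv⟩
  · exact hSc ⟨v, hv⟩

end RPD

open RPD

theorem stmt14_general {V' : Type*} [Finite V'] (G' : SimpleGraph V') (Vs : Set V')
    (B : Set V')
    (hB : IsZFS (G'.induce Vs) (Subtype.val ⁻¹' B)) :
    zNum G' B ≤
      (∑ᶠ c : (G'.induce Vsᶜ).ConnectedComponent,
        zNum ((G'.induce Vsᶜ).induce c.supp)
          ((fun x => ((x : ↥(Vsᶜ)) : V')) ⁻¹' closedNbhd G' Vs)) + B.ncard := by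
  choose Bc hN hBc hcard using fun c : (G'.induce Vsᶜ).ConnectedComponent =>
    exists_isZFS_ncard_eq_zNum ((G'.induce Vsᶜ).induce c.supp)
      ((fun x => ((x : ↥(Vsᶜ)) : V')) ⁻¹' closedNbhd G' Vs)
  have hinj : ∀ c : (G'.induce Vsᶜ).ConnectedComponent,
      Function.Injective fun x : c.supp => ((x : ↥(Vsᶜ)) : V') :=
    fun _ _ _ h => Subtype.val_injective (Subtype.val_injective h)
  calc zNum G' B
      ≤ (B ∪ ⋃ c, (fun x : c.supp => ((x : ↥(Vsᶜ)) : V')) '' Bc c).ncard :=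
        zNum_le_ncard Set.subset_union_left (isZFS_union_iUnion_components hB Bc hBc hN)
    _ ≤ B.ncard + ∑ᶠ c, ((fun x : c.supp => ((x : ↥(Vsᶜ)) : V')) '' Bc c).ncard :=
        (Set.ncard_union_le _ _).trans (Nat.add_le_add_left (Set.ncard_iUnion_le_finsum _) _)
    _ = _ := by
        simp only [Set.ncard_image_of_injective _ (hinj _), hcard]
        exact Nat.add_comm _ _

theorem stmt14 {V' : Type*} [Finite V'] (G' : SimpleGraph V') (Vs : Set V')
    (hproper : Vs ⊂ Set.univ) (B : Set V') (hBV : B ⊆ Vs)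
    (hB : IsZFS (G'.induce Vs) (Subtype.val ⁻¹' B)) :
    zNum G' B ≤
      (∑ᶠ c : (G'.induce Vsᶜ).ConnectedComponent,
        zNum ((G'.induce Vsᶜ).induce c.supp)
          ((fun x => ((x : ↥(Vsᶜ)) : V')) ⁻¹' closedNbhd G' Vs)) + B.ncard :=
  stmt14_general G' Vs B hB
end

section
/- Let G=(V,E) be a graph with a vertex partition V = V₁ ∪ V₂, let N₂ = N[V₁] ∩ V₂, and let G₁ = G[V₁] and G₂ = G[V₂]. Then Z(G) ≤ Z(G₁) + Z(G₂;N₂). -/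
open RPD

theorem stmt15 {V : Type*} [Finite V] (G : SimpleGraph V) (V₁ V₂ : Set V)
    (hcover : V₁ ∪ V₂ = Set.univ) (hdisj : V₁ ∩ V₂ = ∅) :
    zNum G ∅ ≤
      zNum (G.induce V₁) ∅ +
        zNum (G.induce V₂) (Subtype.val ⁻¹' (closedNbhd G V₁ ∩ V₂)) := by
  classical
  -- extract optimal witnesses
  obtain ⟨B₁, -, hZ1, hc1⟩ :
      zNum (G.induce V₁) ∅ ∈
        {n | ∃ B : Set V₁, (∅ : Set V₁) ⊆ B ∧ IsZFS (G.induce V₁) B ∧ B.ncard = n} :=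
    Nat.sInf_mem ⟨(Set.univ : Set V₁).ncard, Set.univ, Set.subset_univ _,
      fun v => ZFC.init v (Set.mem_univ v), rfl⟩
  obtain ⟨B₂, hX2, hZ2, hc2⟩ :
      zNum (G.induce V₂) (Subtype.val ⁻¹' (closedNbhd G V₁ ∩ V₂)) ∈
        {n | ∃ B : Set V₂, (Subtype.val ⁻¹' (closedNbhd G V₁ ∩ V₂)) ⊆ B ∧
          IsZFS (G.induce V₂) B ∧ B.ncard = n} :=
    Nat.sInf_mem ⟨(Set.univ : Set V₂).ncard, Set.univ, Set.subset_univ _,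
      fun v => ZFC.init v (Set.mem_univ v), rfl⟩
  set B : Set V := (Subtype.val '' B₁) ∪ (Subtype.val '' B₂) with hB
  have hmem : ∀ v : V, v ∈ V₁ ∨ v ∈ V₂ := by
    intro v
    have : v ∈ V₁ ∪ V₂ := hcover ▸ Set.mem_univ v
    exact this
  -- vertices of V₂ adjacent to V₁ are in B
  have hN : ∀ x : V, x ∈ V₂ → (∃ u ∈ V₁, G.Adj u x) → x ∈ B := by
    intro x hx2 hadj
    refine Or.inr ⟨⟨x, hx2⟩, hX2 ?_, rfl⟩
    exact ⟨Or.inr hadj, hx2⟩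
  -- claim 1: all of V₁ is forced
  have claim1 : ∀ v : V₁, ZFC G B v.val := by
    intro v
    induction hZ1 v with
    | init v hv => exact ZFC.init _ (Or.inl ⟨v, hv, rfl⟩)
    | force u w hu hadj hothers ih ihothers =>
      refine ZFC.force u.val w.val ih hadj ?_
      intro x hx hxw
      rcases hmem x with h1 | h2
      · have hne' : (⟨x, h1⟩ : V₁) ≠ w := fun h => hxw (congrArg Subtype.val h)
        exact ihothers ⟨x, h1⟩ hx hne'
      · exact ZFC.init _ (hN x h2 ⟨u.val, u.2, hx⟩)
  -- claim 2: all of V₂ is forced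
  have claim2 : ∀ v : V₂, ZFC G B v.val := by
    intro v
    induction hZ2 v with
    | init v hv => exact ZFC.init _ (Or.inr ⟨v, hv, rfl⟩)
    | force u w hu hadj hothers ih ihothers =>
      refine ZFC.force u.val w.val ih hadj ?_
      intro x hx hxw
      rcases hmem x with h1 | h2
      · exact claim1 ⟨x, h1⟩
      · have hne' : (⟨x, h2⟩ : V₂) ≠ w := fun h => hxw (congrArg Subtype.val h)
        exact ihothers ⟨x, h2⟩ hx hne'
  have hZFS : IsZFS G B := by
    intro v
    rcases hmem v with h1 | h2
    · exact claim1 ⟨v, h1⟩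
    · exact claim2 ⟨v, h2⟩
  have hle : zNum G ∅ ≤ B.ncard :=
    Nat.sInf_le ⟨B, Set.empty_subset _, hZFS, rfl⟩
  refine hle.trans ?_
  calc B.ncard ≤ (Subtype.val '' B₁).ncard + (Subtype.val '' B₂).ncard :=
        Set.ncard_union_le _ _
    _ = B₁.ncard + B₂.ncard := by
        rw [Set.ncard_image_of_injective _ Subtype.val_injective,
          Set.ncard_image_of_injective _ Subtype.val_injective]
    _ = _ := by rw [hc1, hc2]
end

section
/- Let G be a graph with no isolated vertices and let S = {u₁,…,u_t} be a power dominating set of G containing X. Then Z(G;X) ≤ Σᵢ deg(uᵢ). -/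
open RPD

lemma ZFC_trans {V : Type*} {G : SimpleGraph V} {B B' : Set V} {v : V}
    (h : ZFC G B' v) (hB' : ∀ x ∈ B', ZFC G B x) : ZFC G B v := by
  induction h with
  | init v hv => exact hB' v hv
  | force u w hu hadj hothers ihu ih => exact ZFC.force u w ihu hadj (fun x hx hxw => ih x hx hxw)

theorem stmt16 {V : Type*} [Fintype V] (G : SimpleGraph V) [DecidableRel G.Adj]
    (hiso : ∀ v : V, ∃ u, G.Adj v u)
    (X : Set V) (S : Finset V) (hXS : X ⊆ ↑S) (hS : IsPDS G ↑S) :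
    zNum G X ≤ ∑ u ∈ S, G.degree u := by
  classical
  -- choose a neighbor for each vertex
  set w : V → V := fun u => (hiso u).choose with hw
  have hwadj : ∀ u, G.Adj u (w u) := fun u => (hiso u).choose_spec
  set Bf : Finset V := S.biUnion (fun u => (insert u (G.neighborFinset u)) \ {w u}) with hBf
  have hSB : ∀ u ∈ S, u ∈ Bf := by
    intro u hu
    refine Finset.mem_biUnion.mpr ⟨u, hu, ?_⟩
    exact Finset.mem_sdiff.mpr ⟨Finset.mem_insert_self u _,
      by simp [G.ne_of_adj (hwadj u)]⟩
  have hzfs : IsZFS G (↑Bf : Set V) := by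
    intro v
    refine ZFC_trans (hS v) ?_
    intro x hx
    rcases hx with hx | ⟨u, hu, hadj⟩
    · exact ZFC.init x (hSB x hx)
    · by_cases hxB : x ∈ Bf
      · exact ZFC.init x hxB
      · have hxw : x = w u := by
          by_contra hne
          exact hxB (Finset.mem_biUnion.mpr ⟨u, hu, by
            simp only [Finset.mem_sdiff, Finset.mem_insert, Finset.mem_singleton,
              G.mem_neighborFinset]
            exact ⟨Or.inr hadj, hne⟩⟩)
        refine ZFC.force u x (ZFC.init u (hSB u hu)) hadj ?_
        intro y hy hyx
        refine ZFC.init y (Finset.mem_biUnion.mpr ⟨u, hu, ?_⟩)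
        simp only [Finset.mem_sdiff, Finset.mem_insert, Finset.mem_singleton,
          G.mem_neighborFinset]
        exact ⟨Or.inr hy, hxw ▸ hyx⟩
  have hcard : Bf.card ≤ ∑ u ∈ S, G.degree u := by
    refine le_trans (Finset.card_biUnion_le) (Finset.sum_le_sum ?_)
    intro u _
    have hwmem : w u ∈ insert u (G.neighborFinset u) :=
      Finset.mem_insert_of_mem ((G.mem_neighborFinset u (w u)).mpr (hwadj u))
    rw [Finset.sdiff_singleton_eq_erase, Finset.card_erase_of_mem hwmem,
      Finset.card_insert_of_notMem (by simp)]
    rw [Nat.add_sub_cancel]; exact le_of_eq rfl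
  refine le_trans (Nat.sInf_le ?_) hcard
  exact ⟨↑Bf, fun x hx => hSB x (hXS hx), hzfs, Set.ncard_coe_finset Bf⟩
end

section
/- Let G be a graph with maximum degree Δ(G) ≥ 1 and X ⊆ V(G). Then ⌈Z(G;X)/Δ(G)⌉ ≤ γ_P(G;X). -/
/-! Take a minimum power dominating set `S ⊇ X`. For each `v ∈ S` keep `v` and all but one of
its neighbours: these are at most `max 1 (deg v) ≤ Δ` vertices, and `v` then forces its remaining
neighbour. The union of these sets contains `X` and forces `N[S]`, hence all of `V`, so
`Z(G;X) ≤ Δ · γ_P(G;X)`. -/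

namespace RPD

variable {V : Type*} {G : SimpleGraph V}

theorem ZFC.trans {B B' : Set V} (h : ∀ b ∈ B', ZFC G B b) {v : V} (hv : ZFC G B' v) :
    ZFC G B v := by
  induction hv with
  | init v hv => exact h v hv
  | force u w _ hadj _ ihu ihothers => exact .force u w ihu hadj ihothers

theorem IsPDS.isZFS_of_forall_zfc {S B : Set V} (hS : IsPDS G S)
    (h : ∀ w ∈ closedNbhd G S, ZFC G B w) : IsZFS G B :=
  fun v => (hS v).trans h

theorem isPDS_univ : IsPDS G Set.univ :=
  fun v => .init v (Or.inl (Set.mem_univ v))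

theorem exists_isPDS_ncard_eq_pdNum (X : Set V) :
    ∃ S, X ⊆ S ∧ IsPDS G S ∧ S.ncard = pdNum G X :=
  Nat.sInf_mem (s := {n | ∃ S : Set V, X ⊆ S ∧ IsPDS G S ∧ S.ncard = n})
    ⟨_, Set.univ, Set.subset_univ X, isPDS_univ, rfl⟩

section Fintype

variable [Fintype V] [DecidableRel G.Adj]

theorem exists_ncard_le_forall_adj_zfc (v : V) :
    ∃ T : Set V, v ∈ T ∧ T.ncard ≤ max 1 (G.degree v) ∧ ∀ w, G.Adj v w → ZFC G T w := by
  rcases (G.neighborSet v).eq_empty_or_nonempty with hempty | ⟨u, hu⟩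
  · refine ⟨{v}, rfl, by simp, fun w hw => ?_⟩
    simp [← SimpleGraph.mem_neighborSet, hempty] at hw
  · have hv : v ∉ G.neighborSet v \ {u} := fun h => G.irrefl h.1
    have hcard : (G.neighborSet v).ncard = G.degree v := by
      rw [Set.ncard_eq_toFinset_card', Set.toFinset_card, G.card_neighborSet_eq_degree]
    have hpos : 0 < G.degree v := hcard ▸ (Set.ncard_pos (Set.toFinite _)).2 ⟨u, hu⟩
    refine ⟨insert v (G.neighborSet v \ {u}), Set.mem_insert v _, ?_, fun w hw => ?_⟩
    · rw [Set.ncard_insert_of_notMem hv, Set.ncard_sdiff_singleton_of_mem hu, hcard]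
      omega
    · by_cases hwu : w = u
      · exact .force v w (.init v (Set.mem_insert v _)) hw fun x hx hxw =>
          .init x (Set.mem_insert_of_mem v ⟨hx, hwu ▸ hxw⟩)
      · exact .init w (Set.mem_insert_of_mem v ⟨hw, hwu⟩)

theorem zNum_le_max_one_maxDegree_mul_pdNum (X : Set V) :
    zNum G X ≤ max 1 G.maxDegree * pdNum G X := by
  classical
  obtain ⟨S, hXS, hS, hScard⟩ := exists_isPDS_ncard_eq_pdNum (G := G) X
  choose T hvT hTcard hTforce using exists_ncard_le_forall_adj_zfc (G := G)
  set B := ⋃ v ∈ S, T v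
  have hSB : S ⊆ B := fun v hv => Set.mem_biUnion hv (hvT v)
  have hB : IsZFS G B := by
    refine hS.isZFS_of_forall_zfc ?_
    rintro w (hw | ⟨v, hv, hvw⟩)
    · exact .init w (hSB hw)
    · exact (hTforce v w hvw).trans fun b hb => .init b (Set.mem_biUnion hv hb)
  have hBcard : B.ncard ≤ max 1 G.maxDegree * S.ncard := by
    have hTle (v : V) : (T v).ncard ≤ max 1 G.maxDegree :=
      (hTcard v).trans (max_le_max_left 1 (G.degree_le_maxDegree v))
    calc B.ncard ≤ ∑ v ∈ S.toFinset, (T v).ncard := by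
          simpa [B] using S.toFinset.set_ncard_biUnion_le T
      _ ≤ S.toFinset.card • max 1 G.maxDegree :=
          Finset.sum_le_card_nsmul _ _ _ fun v _ => hTle v
      _ = max 1 G.maxDegree * S.ncard := by
          rw [smul_eq_mul, mul_comm, Set.ncard_eq_toFinset_card']
  exact hScard ▸ (zNum_le_ncard (hXS.trans hSB) hB).trans hBcard

end Fintype

end RPD

open RPD

theorem stmt17 {V : Type*} [Fintype V] (G : SimpleGraph V) [DecidableRel G.Adj]
    (hΔ : 1 ≤ G.maxDegree) (X : Set V) :
    ⌈(zNum G X : ℚ) / (G.maxDegree : ℚ)⌉ ≤ (pdNum G X : ℤ) := by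
  have key := zNum_le_max_one_maxDegree_mul_pdNum (G := G) X
  rw [max_eq_right hΔ] at key
  have hΔpos : (0 : ℚ) < G.maxDegree := by exact_mod_cast hΔ
  rw [Int.ceil_le, div_le_iff₀ hΔpos]
  exact_mod_cast key.trans_eq (mul_comm _ _)
end

section
/- Let F be a fort of a graph G. If S is a power dominating set of G, then S ∩ N[F] ≠ ∅; and if B is a zero forcing set of G, then B ∩ F ≠ ∅. -/
open RPD

theorem stmt18 {V : Type*} [Finite V] (G : SimpleGraph V) (F : Set V)
    (hne : F.Nonempty) (hproper : F ⊂ Set.univ)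
    (hfort : ∀ v ∉ F, ¬ ∃! u, u ∈ F ∧ G.Adj v u) :
    (∀ S : Set V, IsPDS G S → (S ∩ closedNbhd G F).Nonempty) ∧
      (∀ B : Set V, IsZFS G B → (B ∩ F).Nonempty) := by
  have key : ∀ B : Set V, (B ∩ F) = ∅ → ∀ v, ZFC G B v → v ∉ F := by
    intro B hBF v hv
    induction hv with
    | init v hvB =>
        intro hvF
        exact absurd (Set.mem_inter hvB hvF) (by simp [hBF])
    | force u w hu hadj hothers ihu ih =>
        intro hwF
        apply hfort u ihu
        refine ⟨w, ⟨hwF, hadj⟩, ?_⟩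
        rintro x ⟨hxF, hxadj⟩
        by_contra hxw
        exact ih x hxadj hxw hxF
  have zfs : ∀ B : Set V, IsZFS G B → (B ∩ F).Nonempty := by
    intro B hB
    by_contra h
    rw [Set.not_nonempty_iff_eq_empty] at h
    obtain ⟨v, hv⟩ := hne
    exact key B h v (hB v) hv
  refine ⟨?_, zfs⟩
  intro S hS
  obtain ⟨x, hx1, hx2⟩ := zfs _ hS
  rcases hx1 with hxS | ⟨u, huS, hadj⟩
  · exact ⟨x, hxS, Or.inl hx2⟩
  · exact ⟨u, huS, Or.inr ⟨x, hx2, hadj.symm⟩⟩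
end
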